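/- arXiv:2505.16909 — 7 statements merged into one kernel-verified Lean document; each statement's English description precedes it below -/
import Mathlib

section
/- Let C be a braided monoidal category, let A₁, A₂ be half-braided algebras in C (algebra objects (Aᵢ, mᵢ, ηᵢ) equipped with half-braidings tⁱ satisfying t_X ∘ (m ⊗ id_X) ∘ (id_A ⊗ c⁻¹_{X,A}) = (id_X ⊗ m) ∘ (t_X ⊗ id_A) evaluated appropriately, and the dual condition with c_{A,X}). Then the braided tensor product A₁ ⊗̃ A₂, equipped with the half-braiding t¹·²_X = (t¹_X ⊗ id_{A₂}) ∘ (id_{A₁} ⊗ t²_X), is again a half-braided algebra. -/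
open CategoryTheory MonoidalCategory

variable {C : Type*} [Category C] [MonoidalCategory C]

/-- `(A, mul, one)` is an algebra object in the monoidal category `C`. -/
structure IsMonObj (A : C) (mul : A ⊗ A ⟶ A) (one : 𝟙_ C ⟶ A) : Prop where
  one_mul : (one ▷ A) ≫ mul = (λ_ A).hom
  mul_one : (A ◁ one) ≫ mul = (ρ_ A).hom
  mul_assoc : (mul ▷ A) ≫ mul = (α_ A A A).hom ≫ (A ◁ mul) ≫ mul

/-- The family `t X : V ⊗ X ⟶ X ⊗ V` is a half-braiding for `V`: a natural isomorphism
`V ⊗ - ≅ - ⊗ V` satisfying `t_{X⊗Y} = (id_X ⊗ t_Y) ∘ (t_X ⊗ id_Y)` (written with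
associators). -/
structure IsHalfBraiding (V : C) (t : ∀ X : C, V ⊗ X ⟶ X ⊗ V) : Prop where
  isIso : ∀ X : C, IsIso (t X)
  naturality : ∀ {X Y : C} (f : X ⟶ Y), (V ◁ f) ≫ t Y = t X ≫ (f ▷ V)
  tensor : ∀ X Y : C, t (X ⊗ Y) =
    (α_ V X Y).inv ≫ (t X ▷ Y) ≫ (α_ X V Y).hom ≫ (X ◁ t Y) ≫ (α_ X Y V).inv

variable [BraidedCategory C]

/-- `(A, t, mul, one)` is a *half-braided algebra* in the braided category `C` (Def. 3.1 of
Costantino–Faitg): `(A, t)` lies in the Drinfeld center, `(A, mul, one)` is an algebra, and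
the multiplication satisfies
`m ∈ Hom_{Z(C)}((A,t) ⊗ (A, c⁻¹_{-,A}), (A,t))` and
`m ∈ Hom_{Z(C)}((A, c_{A,-}) ⊗ (A,t), (A,t))`. -/
structure IsHalfBraidedAlg (A : C) (mul : A ⊗ A ⟶ A) (one : 𝟙_ C ⟶ A)
    (t : ∀ X : C, A ⊗ X ⟶ X ⊗ A) : Prop where
  mon : IsMonObj A mul one
  hb : IsHalfBraiding A t
  compat₁ : ∀ X : C, (mul ▷ X) ≫ t X =
    (α_ A A X).hom ≫ (A ◁ (β_ X A).inv) ≫ (α_ A X A).inv ≫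
      (t X ▷ A) ≫ (α_ X A A).hom ≫ (X ◁ mul)
  compat₂ : ∀ X : C, (mul ▷ X) ≫ t X =
    (α_ A A X).hom ≫ (A ◁ t X) ≫ (α_ A X A).inv ≫
      ((β_ A X).hom ▷ A) ≫ (α_ X A A).hom ≫ (X ◁ mul)

/-- The half-braiding on a tensor product, as in the Drinfeld center:
`t¹·²_X = (t¹_X ⊗ id_{A₂}) ∘ (id_{A₁} ⊗ t²_X)`. -/
def tensorHalfBraiding (A₁ A₂ : C) (t₁ : ∀ X : C, A₁ ⊗ X ⟶ X ⊗ A₁)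
    (t₂ : ∀ X : C, A₂ ⊗ X ⟶ X ⊗ A₂) (X : C) : (A₁ ⊗ A₂) ⊗ X ⟶ X ⊗ (A₁ ⊗ A₂) :=
  (α_ A₁ A₂ X).hom ≫ (A₁ ◁ t₂ X) ≫ (α_ A₁ X A₂).inv ≫ (t₁ X ▷ A₂) ≫ (α_ X A₁ A₂).hom

/-!
Conditions `compat₁` and `compat₂` say that `m` is a morphism in the Drinfeld center `Z(C)` out
of `(A, t) ⊗ (A, c⁻¹_{-,A})`, resp. `(A, c_{A,-}) ⊗ (A, t)`. In the braided category `Z(C)`, the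
inverse braiding of `(A₁, c⁻¹_{-,A₁})` with `(A₂, t₂)` and the braiding of `(A₁, c_{A₁,-})` with
`(A₂, t₂)` both have underlying morphism `c_{A₂,A₁}`. Hence the multiplication of `A₁ ⊗̃ A₂`
underlies the center morphisms `tensorδ ≫ (m₁ ⊗ m₂)` and `tensorμ ≫ (m₁ ⊗ m₂)`, and since
`A ↦ (A, c⁻¹_{-,A})` and `A ↦ (A, c_{A,-})` are monoidal, these are the two conditions for
`A₁ ⊗ A₂`.
-/

open BraidedCategory Center

theorem IsMonObj.tensor {A₁ A₂ : C} {m₁ : A₁ ⊗ A₁ ⟶ A₁} {η₁ : 𝟙_ C ⟶ A₁}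
    {m₂ : A₂ ⊗ A₂ ⟶ A₂} {η₂ : 𝟙_ C ⟶ A₂} (h₁ : IsMonObj A₁ m₁ η₁) (h₂ : IsMonObj A₂ m₂ η₂) :
    IsMonObj (A₁ ⊗ A₂) (tensorμ A₁ A₂ A₁ A₂ ≫ (m₁ ⊗ₘ m₂)) ((λ_ (𝟙_ C)).inv ≫ (η₁ ⊗ₘ η₂)) :=
  letI : MonObj A₁ := ⟨η₁, m₁, h₁.one_mul, h₁.mul_one, h₁.mul_assoc⟩
  letI : MonObj A₂ := ⟨η₂, m₂, h₂.one_mul, h₂.mul_one, h₂.mul_assoc⟩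
  ⟨MonObj.Mon_tensor_one_mul A₁ A₂, MonObj.Mon_tensor_mul_one A₁ A₂,
    MonObj.Mon_tensor_mul_assoc A₁ A₂⟩

namespace IsHalfBraiding

omit [BraidedCategory C]

noncomputable def toCenter {A : C} {t : ∀ X : C, A ⊗ X ⟶ X ⊗ A} (h : IsHalfBraiding A t) :
    Center C :=
  ⟨A, { β X := @asIso _ _ _ _ (t X) (h.isIso X)
        monoidal X Y := by simpa using h.tensor X Y
        naturality f := by simpa using h.naturality f }⟩

theorem of_center (Z : Center C) : IsHalfBraiding Z.1 (fun X => (Z.2.β X).hom) :=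
  ⟨fun _ => inferInstance, Z.2.naturality, Z.2.monoidal⟩

end IsHalfBraiding

namespace CategoryTheory.Center

section

omit [BraidedCategory C]

theorem Hom.comm_tensor {Z W Z' : Center C} (φ : Z ⊗ W ⟶ Z') (X : C) :
    (φ.f ▷ X) ≫ (Z'.2.β X).hom =
      (α_ Z.1 W.1 X).hom ≫ (Z.1 ◁ (W.2.β X).hom) ≫ (α_ Z.1 X W.1).inv ≫
        ((Z.2.β X).hom ▷ W.1) ≫ (α_ X Z.1 W.1).hom ≫ (X ◁ φ.f) := by
  simpa using φ.comm X

def Hom.ofTensor {Z W Z' : Center C} (f : Z.1 ⊗ W.1 ⟶ Z'.1)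
    (hf : ∀ X : C, (f ▷ X) ≫ (Z'.2.β X).hom =
      (α_ Z.1 W.1 X).hom ≫ (Z.1 ◁ (W.2.β X).hom) ≫ (α_ Z.1 X W.1).inv ≫
        ((Z.2.β X).hom ▷ W.1) ≫ (α_ X Z.1 W.1).hom ≫ (X ◁ f)) : Z ⊗ W ⟶ Z' where
  f := f
  comm X := by simpa using hf X

end

def ofBraidedInvObj (A : C) : Center C :=
  ⟨A, { β X := (β_ X A).symm }⟩

theorem tensor_ofBraidedInvObj_β_hom (A B X : C) :
    ((ofBraidedInvObj A ⊗ ofBraidedInvObj B).2.β X).hom = (β_ X (A ⊗ B)).inv := by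
  change (α_ A B X).hom ≫ (A ◁ (β_ X B).inv) ≫ (α_ A X B).inv ≫ ((β_ X A).inv ▷ B) ≫
    (α_ X A B).hom = _
  simp

theorem tensor_ofBraidedObj_β_hom (A B X : C) :
    ((ofBraidedObj A ⊗ ofBraidedObj B).2.β X).hom = (β_ (A ⊗ B) X).hom := by
  change (α_ A B X).hom ≫ (A ◁ (β_ B X).hom) ≫ (α_ A X B).inv ≫ ((β_ A X).hom ▷ B) ≫
    (α_ X A B).hom = _
  simp

theorem braiding_ofBraidedInvObj_inv_f (A : C) (Y : Center C) :
    (β_ (ofBraidedInvObj A) Y).inv.f = (β_ Y.1 A).hom := by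
  change inv (β_ Y.1 A).inv = _
  simp

theorem braiding_ofBraidedObj_hom_f (A : C) (Y : Center C) :
    (β_ (ofBraidedObj A) Y).hom.f = (β_ A Y.1).hom :=
  rfl

theorem tensorδ_ofBraidedInvObj_f (X₁ Y₁ Y₂ : Center C) (A : C) :
    (tensorδ X₁ (ofBraidedInvObj A) Y₁ Y₂).f = tensorμ X₁.1 Y₁.1 A Y₂.1 := by
  simp [tensorδ, tensorμ, braiding_ofBraidedInvObj_inv_f]
  rfl

theorem tensorμ_ofBraidedObj_f (X₁ Y₁ Y₂ : Center C) (A : C) :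
    (tensorμ X₁ (ofBraidedObj A) Y₁ Y₂).f = tensorμ X₁.1 A Y₁.1 Y₂.1 := by
  simp [tensorμ, braiding_ofBraidedObj_hom_f]
  rfl

end CategoryTheory.Center

namespace IsHalfBraidedAlg

variable {A : C} {m : A ⊗ A ⟶ A} {η : 𝟙_ C ⟶ A} {t : ∀ X : C, A ⊗ X ⟶ X ⊗ A}

noncomputable def mulHomOfBraidedInv (h : IsHalfBraidedAlg A m η t) :
    h.hb.toCenter ⊗ ofBraidedInvObj A ⟶ h.hb.toCenter :=
  Hom.ofTensor m h.compat₁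

noncomputable def mulHomOfBraided (h : IsHalfBraidedAlg A m η t) :
    ofBraidedObj A ⊗ h.hb.toCenter ⟶ h.hb.toCenter :=
  Hom.ofTensor m h.compat₂

end IsHalfBraidedAlg

/-- If `A₁` and `A₂` are half-braided algebras in a braided monoidal
category `C`, then the braided tensor product `A₁ ⊗̃ A₂` (underlying object `A₁ ⊗ A₂`,
multiplication `(m₁ ⊗ m₂) ∘ (id ⊗ c_{A₂,A₁} ⊗ id)`, unit `η₁ ⊗ η₂`), equipped with the
tensored half-braiding `t¹·²_X = (t¹_X ⊗ id) ∘ (id ⊗ t²_X)`, is again a half-braided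
algebra. -/
theorem braidedTensorProduct_isHalfBraidedAlg
    {A₁ A₂ : C} {m₁ : A₁ ⊗ A₁ ⟶ A₁} {η₁ : 𝟙_ C ⟶ A₁} {t₁ : ∀ X : C, A₁ ⊗ X ⟶ X ⊗ A₁}
    {m₂ : A₂ ⊗ A₂ ⟶ A₂} {η₂ : 𝟙_ C ⟶ A₂} {t₂ : ∀ X : C, A₂ ⊗ X ⟶ X ⊗ A₂}
    (h₁ : IsHalfBraidedAlg A₁ m₁ η₁ t₁) (h₂ : IsHalfBraidedAlg A₂ m₂ η₂ t₂) :
    IsHalfBraidedAlg (A₁ ⊗ A₂)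
      (tensorμ A₁ A₂ A₁ A₂ ≫ (m₁ ⊗ₘ m₂))
      ((λ_ (𝟙_ C)).inv ≫ (η₁ ⊗ₘ η₂))
      (tensorHalfBraiding A₁ A₂ t₁ t₂) := by
  set Z₁ := h₁.hb.toCenter
  set Z₂ := h₂.hb.toCenter
  refine ⟨h₁.mon.tensor h₂.mon, IsHalfBraiding.of_center (Z₁ ⊗ Z₂), fun X => ?_, fun X => ?_⟩
  · have hcomm := (tensorδ Z₁ (ofBraidedInvObj A₁) Z₂ (ofBraidedInvObj A₂) ≫
      (h₁.mulHomOfBraidedInv ⊗ₘ h₂.mulHomOfBraidedInv)).comm_tensor X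
    rwa [comp_f, tensorδ_ofBraidedInvObj_f, tensor_ofBraidedInvObj_β_hom] at hcomm
  · have hcomm := (tensorμ (ofBraidedObj A₁) (ofBraidedObj A₂) Z₁ Z₂ ≫
      (h₁.mulHomOfBraided ⊗ₘ h₂.mulHomOfBraided)).comm_tensor X
    rwa [comp_f, tensorμ_ofBraidedObj_f, tensor_ofBraidedObj_β_hom] at hcomm
end

section
/- Let C be a braided monoidal category and A₁ = (A₁, t¹, m₁, η₁), A₂ = (A₂, t², m₂, η₂) half-braided algebras in C. Then the component T = t¹_{A₂} : A₁ ⊗ A₂ → A₂ ⊗ A₁ of the half-braiding of A₁ at the object A₂ is an isomorphism of algebras from the braided tensor product A₁ ⊗̃ A₂ to the braided tensor product A₂ ⊗̃ A₁. -/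
open CategoryTheory MonoidalCategory

variable {C : Type*} [Category C] [MonoidalCategory C]

-- The tensor axiom at `𝟙 ⊗ 𝟙 ≅ 𝟙` makes the automorphism `u = ρ⁻¹ ≫ t 𝟙 ≫ λ` idempotent.
theorem IsHalfBraiding.app_unit {V : C} {t : ∀ X : C, V ⊗ X ⟶ X ⊗ V}
    (h : IsHalfBraiding V t) : t (𝟙_ C) = (ρ_ V).hom ≫ (λ_ V).inv := by
  set u := (ρ_ V).inv ≫ t (𝟙_ C) ≫ (λ_ V).hom with hu
  have ht : t (𝟙_ C) = (ρ_ V).hom ≫ u ≫ (λ_ V).inv := by simp [hu]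
  have : IsIso u := by
    have := h.isIso (𝟙_ C)
    rw [hu]
    infer_instance
  have idem : u ≫ u = u ≫ 𝟙 V :=
    calc u ≫ u = (ρ_ V).inv ≫ (V ◁ (λ_ (𝟙_ C)).inv) ≫ t (𝟙_ C ⊗ 𝟙_ C) ≫
          ((λ_ (𝟙_ C)).hom ▷ V) ≫ (λ_ V).hom := by
          rw [h.tensor, ht]
          monoidal
      _ = u ≫ 𝟙 V := by
          rw [reassoc_of% h.naturality (λ_ (𝟙_ C)).inv, hu]
          simp
  rw [ht, cancel_epi u |>.mp idem, Category.id_comp]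

theorem IsHalfBraiding.leftUnitor_inv_tensorHom_comp {V X : C} {t : ∀ X : C, V ⊗ X ⟶ X ⊗ V}
    (h : IsHalfBraiding V t) (f : 𝟙_ C ⟶ V) (g : 𝟙_ C ⟶ X) :
    ((λ_ (𝟙_ C)).inv ≫ (f ⊗ₘ g)) ≫ t X = (λ_ (𝟙_ C)).inv ≫ (g ⊗ₘ f) := by
  rw [Category.assoc, tensorHom_def_assoc, h.naturality, h.app_unit]
  simp [tensorHom_def', ← unitors_equal]

variable [BraidedCategory C]

/-- The multiplication of the braided tensor product of two algebras:
`(m₁ ⊗ m₂) ∘ (id ⊗ c_{A₂,A₁} ⊗ id)`. -/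
noncomputable def braidedMul (A₁ A₂ : C) (m₁ : A₁ ⊗ A₁ ⟶ A₁) (m₂ : A₂ ⊗ A₂ ⟶ A₂) :
    (A₁ ⊗ A₂) ⊗ (A₁ ⊗ A₂) ⟶ A₁ ⊗ A₂ :=
  tensorμ A₁ A₂ A₁ A₂ ≫ (m₁ ⊗ₘ m₂)

namespace IsHalfBraidedAlg

variable {A₁ A₂ : C} {m₁ : A₁ ⊗ A₁ ⟶ A₁} {η₁ : 𝟙_ C ⟶ A₁} {t₁ : ∀ X : C, A₁ ⊗ X ⟶ X ⊗ A₁}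
  {m₂ : A₂ ⊗ A₂ ⟶ A₂}

/-- Both sides of the multiplicativity of `T = t₁ A₂` equal the composite that applies `T` to the
first `A₁ ⊗ A₂`, multiplies the two `A₁` factors and moves the product past the last `A₂` by `T`,
then multiplies the `A₂` factors. This side reaches it through `compat₁`, the other through
`compat₂`. -/
theorem braidedMul_comp (h₁ : IsHalfBraidedAlg A₁ m₁ η₁ t₁) :
    braidedMul A₁ A₂ m₁ m₂ ≫ t₁ A₂ =
      (α_ (A₁ ⊗ A₂) A₁ A₂).inv ≫ ((t₁ A₂ ▷ A₁) ▷ A₂) ≫ ((α_ A₂ A₁ A₁).hom ▷ A₂) ≫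
        (α_ A₂ (A₁ ⊗ A₁) A₂).hom ≫ (A₂ ◁ ((m₁ ▷ A₂) ≫ t₁ A₂)) ≫ (α_ A₂ A₂ A₁).inv ≫
        (m₂ ▷ A₁) :=
  calc braidedMul A₁ A₂ m₁ m₂ ≫ t₁ A₂
      = tensorμ A₁ A₂ A₁ A₂ ≫ (m₁ ▷ (A₂ ⊗ A₂)) ≫ t₁ (A₂ ⊗ A₂) ≫ (m₂ ▷ A₁) := by
        rw [braidedMul, Category.assoc, tensorHom_def_assoc, h₁.hb.naturality]
    _ = tensorμ A₁ A₂ A₁ A₂ ≫ (α_ (A₁ ⊗ A₁) A₂ A₂).inv ≫ (((m₁ ▷ A₂) ≫ t₁ A₂) ▷ A₂) ≫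
          (α_ A₂ A₁ A₂).hom ≫ (A₂ ◁ t₁ A₂) ≫ (α_ A₂ A₂ A₁).inv ≫ (m₂ ▷ A₁) := by
        rw [h₁.hb.tensor]
        monoidal
    _ = _ := by
        conv_lhs => rw [h₁.compat₁, tensorμ]
        simp

theorem tensorHom_comp_braidedMul (h₁ : IsHalfBraidedAlg A₁ m₁ η₁ t₁) :
    (t₁ A₂ ⊗ₘ t₁ A₂) ≫ braidedMul A₂ A₁ m₂ m₁ =
      (α_ (A₁ ⊗ A₂) A₁ A₂).inv ≫ ((t₁ A₂ ▷ A₁) ▷ A₂) ≫ ((α_ A₂ A₁ A₁).hom ▷ A₂) ≫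
        (α_ A₂ (A₁ ⊗ A₁) A₂).hom ≫ (A₂ ◁ ((m₁ ▷ A₂) ≫ t₁ A₂)) ≫ (α_ A₂ A₂ A₁).inv ≫
        (m₂ ▷ A₁) := by
  rw [h₁.compat₂, braidedMul, tensorHom_def (t₁ A₂), tensorHom_def' m₂, tensorμ]
  monoidal

theorem braidedMul_comp_eq_tensorHom_comp_braidedMul (h₁ : IsHalfBraidedAlg A₁ m₁ η₁ t₁) :
    braidedMul A₁ A₂ m₁ m₂ ≫ t₁ A₂ = (t₁ A₂ ⊗ₘ t₁ A₂) ≫ braidedMul A₂ A₁ m₂ m₁ :=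
  h₁.braidedMul_comp.trans h₁.tensorHom_comp_braidedMul.symm

end IsHalfBraidedAlg

theorem halfBraiding_component_algebra_iso_general
    {A₁ A₂ : C} {m₁ : A₁ ⊗ A₁ ⟶ A₁} {η₁ : 𝟙_ C ⟶ A₁} {t₁ : ∀ X : C, A₁ ⊗ X ⟶ X ⊗ A₁}
    {m₂ : A₂ ⊗ A₂ ⟶ A₂} {η₂ : 𝟙_ C ⟶ A₂}
    (h₁ : IsHalfBraidedAlg A₁ m₁ η₁ t₁) :
    IsIso (t₁ A₂) ∧
    ((λ_ (𝟙_ C)).inv ≫ (η₁ ⊗ₘ η₂)) ≫ t₁ A₂ = (λ_ (𝟙_ C)).inv ≫ (η₂ ⊗ₘ η₁) ∧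
    braidedMul A₁ A₂ m₁ m₂ ≫ t₁ A₂ = (t₁ A₂ ⊗ₘ t₁ A₂) ≫ braidedMul A₂ A₁ m₂ m₁ :=
  ⟨h₁.hb.isIso A₂, h₁.hb.leftUnitor_inv_tensorHom_comp η₁ η₂,
    h₁.braidedMul_comp_eq_tensorHom_comp_braidedMul⟩

/-- Let `A₁, A₂` be half-braided algebras in a braided monoidal category
`C`.  Then the component `T = t¹_{A₂} : A₁ ⊗ A₂ ⟶ A₂ ⊗ A₁` of the half-braiding of `A₁`
at the object `A₂` is an isomorphism of algebras from the braided tensor product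
`A₁ ⊗̃ A₂` to the braided tensor product `A₂ ⊗̃ A₁`: it is invertible, preserves units and
preserves multiplications. -/
theorem halfBraiding_component_algebra_iso
    {A₁ A₂ : C} {m₁ : A₁ ⊗ A₁ ⟶ A₁} {η₁ : 𝟙_ C ⟶ A₁} {t₁ : ∀ X : C, A₁ ⊗ X ⟶ X ⊗ A₁}
    {m₂ : A₂ ⊗ A₂ ⟶ A₂} {η₂ : 𝟙_ C ⟶ A₂} {t₂ : ∀ X : C, A₂ ⊗ X ⟶ X ⊗ A₂}
    (h₁ : IsHalfBraidedAlg A₁ m₁ η₁ t₁) (h₂ : IsHalfBraidedAlg A₂ m₂ η₂ t₂) :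
    IsIso (t₁ A₂) ∧
    ((λ_ (𝟙_ C)).inv ≫ (η₁ ⊗ₘ η₂)) ≫ t₁ A₂ = (λ_ (𝟙_ C)).inv ≫ (η₂ ⊗ₘ η₁) ∧
    braidedMul A₁ A₂ m₁ m₂ ≫ t₁ A₂ = (t₁ A₂ ⊗ₘ t₁ A₂) ≫ braidedMul A₂ A₁ m₂ m₁ :=
  halfBraiding_component_algebra_iso_general h₁
end

section
/- Let C be a braided monoidal category, A = (A, t, m, η) a half-braided algebra in C, and M = (M, ▸) a left A-module. Then the family hbl^M_X = (id_X ⊗ ▸) ∘ (t_X ⊗ id_M) ∘ (id_A ⊗ c⁻¹_{X,M}) ∘ (η ⊗ id_{M⊗X}) defines a half-braiding for M: it is a natural isomorphism M ⊗ - ⇒ - ⊗ M satisfying hbl^M_{X⊗Y} = (id_X ⊗ hbl^M_Y) ∘ (hbl^M_X ⊗ id_Y). -/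
open CategoryTheory MonoidalCategory

variable {C : Type*} [Category C] [MonoidalCategory C]

variable [BraidedCategory C]

/-- The half-braiding `hbl^M` on a left module `(M, act)` over a half-braided algebra
`(A, t, mul, one)`:
`hbl^M_X = (id_X ⊗ ▸) ∘ (t_X ⊗ id_M) ∘ (id_A ⊗ c⁻¹_{X,M}) ∘ (η ⊗ id_{M⊗X})`. -/
noncomputable def hbl (A : C) (one : 𝟙_ C ⟶ A) (t : ∀ X : C, A ⊗ X ⟶ X ⊗ A)
    (M : C) (act : A ⊗ M ⟶ M) (X : C) : M ⊗ X ⟶ X ⊗ M :=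
  (λ_ (M ⊗ X)).inv ≫ (one ▷ (M ⊗ X)) ≫ (A ◁ (β_ X M).inv) ≫ (α_ A X M).inv ≫
    (t X ▷ M) ≫ (α_ X A M).hom ≫ (X ◁ act)


section HblAux

set_option maxHeartbeats 1000000

variable {A : C} {mul : A ⊗ A ⟶ A} {one : 𝟙_ C ⟶ A} {t : ∀ X : C, A ⊗ X ⟶ X ⊗ A}

/-- Candidate inverse of `hbl`. -/
noncomputable def ghbl (A : C) (one : 𝟙_ C ⟶ A) (t : ∀ X : C, A ⊗ X ⟶ X ⊗ A)
    (M : C) (act : A ⊗ M ⟶ M) (X : C) [IsIso (t X)] : X ⊗ M ⟶ M ⊗ X :=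
  (X ◁ ((λ_ M).inv ≫ (one ▷ M))) ≫ (α_ X A M).inv ≫ (inv (t X) ▷ M) ≫
    (α_ A X M).hom ≫ (A ◁ (β_ X M).hom) ≫ (α_ A M X).inv ≫ (act ▷ X)

theorem hbl_natural {M : C} {act : A ⊗ M ⟶ M}
    (ht : ∀ {X Y : C} (f : X ⟶ Y), (A ◁ f) ≫ t Y = t X ≫ (f ▷ A))
    {X Y : C} (f : X ⟶ Y) :
    (M ◁ f) ≫ hbl A one t M act Y = hbl A one t M act X ≫ (f ▷ M) := by
  simp only [hbl, Category.assoc]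
  rw [leftUnitor_inv_naturality_assoc, whisker_exchange_assoc,
    ← MonoidalCategory.whiskerLeft_comp_assoc,
    BraidedCategory.braiding_inv_naturality_right,
    MonoidalCategory.whiskerLeft_comp_assoc, associator_inv_naturality_middle_assoc,
    ← comp_whiskerRight_assoc, ht, comp_whiskerRight_assoc, associator_naturality_left_assoc,
    ← whisker_exchange]

theorem hbl_t_expand (one_mul : (one ▷ A) ≫ mul = (λ_ A).hom)
    (compat₁ : ∀ X : C, (mul ▷ X) ≫ t X =
      (α_ A A X).hom ≫ (A ◁ (β_ X A).inv) ≫ (α_ A X A).inv ≫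
        (t X ▷ A) ≫ (α_ X A A).hom ≫ (X ◁ mul)) (X : C) :
    t X = (λ_ (A ⊗ X)).inv ≫ (one ▷ (A ⊗ X)) ≫ (A ◁ (β_ X A).inv) ≫ (α_ A X A).inv ≫
      (t X ▷ A) ≫ (α_ X A A).hom ≫ (X ◁ mul) := by
  have h : (α_ A A X).inv ≫ (mul ▷ X) ≫ t X =
      (A ◁ (β_ X A).inv) ≫ (α_ A X A).inv ≫ (t X ▷ A) ≫ (α_ X A A).hom ≫ (X ◁ mul) := by
    rw [compat₁ X, Iso.inv_hom_id_assoc]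
  rw [← h]
  calc t X = ((λ_ A).inv ▷ X) ≫ (((one ▷ A) ≫ mul) ▷ X) ≫ t X := by
        rw [one_mul]; monoidal
    _ = (λ_ (A ⊗ X)).inv ≫ (one ▷ (A ⊗ X)) ≫ (α_ A A X).inv ≫ (mul ▷ X) ≫ t X := by
        rw [comp_whiskerRight]
        monoidal

theorem hbl_lemK (one_mul : (one ▷ A) ≫ mul = (λ_ A).hom)
    (compat₁ : ∀ X : C, (mul ▷ X) ≫ t X =
      (α_ A A X).hom ≫ (A ◁ (β_ X A).inv) ≫ (α_ A X A).inv ≫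
        (t X ▷ A) ≫ (α_ X A A).hom ≫ (X ◁ mul))
    (X : C) [IsIso (t X)] :
    t X ≫ ((((ρ_ X).inv ≫ (X ◁ one) ≫ inv (t X)) ▷ A) ≫ (α_ A X A).hom ≫
      (A ◁ (β_ X A).hom) ≫ (α_ A A X).inv ≫ (mul ▷ X)) = 𝟙 (A ⊗ X) := by
  rw [← cancel_mono (t X)]
  have hQ : (t X ▷ A) ≫ (α_ X A A).hom ≫ (X ◁ mul) =
      (α_ A X A).hom ≫ (A ◁ (β_ X A).hom) ≫ (α_ A A X).inv ≫ (mul ▷ X) ≫ t X := by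
    rw [compat₁ X]
    simp
  simp only [Category.assoc, Category.id_comp, comp_whiskerRight]
  rw [← hQ]
  rw [← comp_whiskerRight_assoc (inv (t X)) (t X), IsIso.inv_hom_id, id_whiskerRight,
    Category.id_comp]
  calc t X ≫ (ρ_ X).inv ▷ A ≫ (X ◁ one) ▷ A ≫ (α_ X A A).hom ≫ X ◁ mul
      = t X ≫ (ρ_ X).inv ▷ A ≫ (α_ X (𝟙_ C) A).hom ≫ X ◁ (one ▷ A ≫ mul) := by
        rw [MonoidalCategory.whiskerLeft_comp, associator_naturality_middle_assoc]
    _ = t X := by rw [one_mul]; monoidal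

theorem hbl_lemK' (one_mul : (one ▷ A) ≫ mul = (λ_ A).hom)
    (compat₁ : ∀ X : C, (mul ▷ X) ≫ t X =
      (α_ A A X).hom ≫ (A ◁ (β_ X A).inv) ≫ (α_ A X A).inv ≫
        (t X ▷ A) ≫ (α_ X A A).hom ≫ (X ◁ mul))
    (X : C) [IsIso (t X)] :
    ((ρ_ X).inv ≫ (X ◁ one) ≫ inv (t X)) ≫ (β_ X A).inv ≫
      (((λ_ X).inv ≫ (one ▷ X) ≫ t X) ▷ A) ≫ (α_ X A A).hom ≫ (X ◁ mul) =
    (ρ_ X).inv ≫ (X ◁ one) := by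
  have hQ : (t X ▷ A) ≫ (α_ X A A).hom ≫ (X ◁ mul) =
      (α_ A X A).hom ≫ (A ◁ (β_ X A).hom) ≫ (α_ A A X).inv ≫ (mul ▷ X) ≫ t X := by
    rw [compat₁ X]
    simp
  have hc1 : ((λ_ X).inv ▷ A) ≫ (α_ (𝟙_ C) X A).hom = (λ_ (X ⊗ A)).inv := by monoidal
  have hc2 : (λ_ (A ⊗ X)).inv ≫ (α_ (𝟙_ C) A X).inv ≫ ((λ_ A).hom ▷ X) = 𝟙 (A ⊗ X) := by
    monoidal
  simp only [Category.assoc, comp_whiskerRight]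
  rw [hQ, associator_naturality_left_assoc, ← whisker_exchange_assoc, reassoc_of% hc1,
    ← leftUnitor_inv_naturality_assoc, Iso.inv_hom_id_assoc,
    associator_inv_naturality_left_assoc, ← comp_whiskerRight_assoc, one_mul, reassoc_of% hc2]
  simp

theorem hbl_hom_inv {M : C} {act : A ⊗ M ⟶ M}
    (one_mul : (one ▷ A) ≫ mul = (λ_ A).hom)
    (compat₁ : ∀ X : C, (mul ▷ X) ≫ t X =
      (α_ A A X).hom ≫ (A ◁ (β_ X A).inv) ≫ (α_ A X A).inv ≫
        (t X ▷ A) ≫ (α_ X A A).hom ≫ (X ◁ mul))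
    (act_one : (one ▷ M) ≫ act = (λ_ M).hom)
    (act_mul : (mul ▷ M) ≫ act = (α_ A A M).hom ≫ (A ◁ act) ≫ act)
    (X : C) [IsIso (t X)] :
    hbl A one t M act X ≫ ghbl A one t M act X = 𝟙 (M ⊗ X) := by
  have h1 : (X ◁ act) ≫ ghbl A one t M act X =
      (X ◁ ((λ_ (A ⊗ M)).inv ≫ (one ▷ (A ⊗ M)))) ≫ (α_ X A (A ⊗ M)).inv ≫
        (inv (t X) ▷ (A ⊗ M)) ≫ (α_ A X (A ⊗ M)).hom ≫ (A ◁ (β_ X (A ⊗ M)).hom) ≫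
        (α_ A (A ⊗ M) X).inv ≫ (((α_ A A M).inv ≫ (mul ▷ M) ≫ act) ▷ X) := by
    rw [ghbl]
    rw [← MonoidalCategory.whiskerLeft_comp_assoc, ← Category.assoc act,
      leftUnitor_inv_naturality, Category.assoc, whisker_exchange,
      MonoidalCategory.whiskerLeft_comp, MonoidalCategory.whiskerLeft_comp]
    simp only [Category.assoc]
    rw [associator_inv_naturality_right_assoc, whisker_exchange_assoc,
      associator_naturality_right_assoc, ← MonoidalCategory.whiskerLeft_comp_assoc A,
      BraidedCategory.braiding_naturality_right, MonoidalCategory.whiskerLeft_comp_assoc,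
      associator_inv_naturality_middle_assoc, ← comp_whiskerRight_assoc]
    rw [show (α_ A A M).inv ≫ mul ▷ M ≫ act = A ◁ act ≫ act from by
      rw [act_mul, Iso.inv_hom_id_assoc]]
    monoidal
  simp only [hbl, Category.assoc, h1]
  rw [BraidedCategory.braiding_tensor_right_hom]
  trans ((λ_ (M ⊗ X)).inv ≫ one ▷ (M ⊗ X) ≫ A ◁ (β_ X M).inv ≫ (α_ A X M).inv ≫
    (t X ▷ M) ≫ ((((ρ_ X).inv ≫ X ◁ one ≫ inv (t X)) ▷ A) ▷ M) ≫ ((α_ A X A).hom ▷ M) ≫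
    ((A ◁ (β_ X A).hom) ▷ M) ≫ ((α_ A A X).inv ▷ M) ≫ (α_ (A ⊗ A) X M).hom ≫
    ((A ⊗ A) ◁ (β_ X M).hom) ≫ (mul ▷ (M ⊗ X)) ≫ (α_ A M X).inv ≫ (act ▷ X))
  · monoidal
  rw [whisker_exchange_assoc mul (β_ X M).hom]
  trans ((λ_ (M ⊗ X)).inv ≫ one ▷ (M ⊗ X) ≫ A ◁ (β_ X M).inv ≫ (α_ A X M).inv ≫
    ((t X ≫ ((((ρ_ X).inv ≫ (X ◁ one) ≫ inv (t X)) ▷ A) ≫ (α_ A X A).hom ≫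
      (A ◁ (β_ X A).hom) ≫ (α_ A A X).inv ≫ (mul ▷ X))) ▷ M) ≫ (α_ A X M).hom ≫
    (A ◁ (β_ X M).hom) ≫ (α_ A M X).inv ≫ (act ▷ X))
  · monoidal
  rw [hbl_lemK one_mul compat₁ X, id_whiskerRight, Category.id_comp, Iso.inv_hom_id_assoc,
    ← MonoidalCategory.whiskerLeft_comp_assoc, Iso.inv_hom_id, MonoidalCategory.whiskerLeft_id,
    Category.id_comp, associator_inv_naturality_left_assoc, ← comp_whiskerRight, act_one]
  monoidal

theorem hbl_inv_hom {M : C} {act : A ⊗ M ⟶ M}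
    (one_mul : (one ▷ A) ≫ mul = (λ_ A).hom)
    (compat₁ : ∀ X : C, (mul ▷ X) ≫ t X =
      (α_ A A X).hom ≫ (A ◁ (β_ X A).inv) ≫ (α_ A X A).inv ≫
        (t X ▷ A) ≫ (α_ X A A).hom ≫ (X ◁ mul))
    (act_one : (one ▷ M) ≫ act = (λ_ M).hom)
    (act_mul : (mul ▷ M) ≫ act = (α_ A A M).hom ≫ (A ◁ act) ≫ act)
    (X : C) [IsIso (t X)] :
    ghbl A one t M act X ≫ hbl A one t M act X = 𝟙 (X ⊗ M) := by
  have hact : (α_ A A M).inv ≫ mul ▷ M ≫ act = A ◁ act ≫ act := by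
    rw [act_mul, Iso.inv_hom_id_assoc]
  have h2 : (act ▷ X) ≫ hbl A one t M act X =
      (λ_ ((A ⊗ M) ⊗ X)).inv ≫ (one ▷ ((A ⊗ M) ⊗ X)) ≫ (A ◁ (β_ X (A ⊗ M)).inv) ≫
        (α_ A X (A ⊗ M)).inv ≫ (t X ▷ (A ⊗ M)) ≫ (α_ X A (A ⊗ M)).hom ≫
        (X ◁ ((α_ A A M).inv ≫ (mul ▷ M) ≫ act)) := by
    rw [hbl, leftUnitor_inv_naturality_assoc, whisker_exchange_assoc,
      ← MonoidalCategory.whiskerLeft_comp_assoc A,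
      BraidedCategory.braiding_inv_naturality_left,
      MonoidalCategory.whiskerLeft_comp_assoc, associator_inv_naturality_right_assoc,
      whisker_exchange_assoc (t X) act, associator_naturality_right_assoc,
      ← MonoidalCategory.whiskerLeft_comp, hact]
  simp only [ghbl, Category.assoc, h2]
  rw [BraidedCategory.braiding_tensor_right_inv]
  trans (X ◁ ((λ_ M).inv ≫ one ▷ M) ≫ (α_ X A M).inv ≫ (inv (t X) ▷ M) ≫ (α_ A X M).hom ≫
    (A ◁ (β_ X M).hom) ≫ (λ_ (A ⊗ (M ⊗ X))).inv ≫ (one ▷ (A ⊗ (M ⊗ X))) ≫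
    (A ◁ (A ◁ (β_ X M).inv)) ≫ (A ◁ (α_ A X M).inv) ≫ (A ◁ ((β_ X A).inv ▷ M)) ≫
    (A ◁ (α_ X A M).hom) ≫ (α_ A X (A ⊗ M)).inv ≫ (t X ▷ (A ⊗ M)) ≫
    (α_ X A (A ⊗ M)).hom ≫ (X ◁ ((α_ A A M).inv ≫ (mul ▷ M) ≫ act)))
  · monoidal
  rw [← whisker_exchange_assoc one (A ◁ (β_ X M).inv)]
  trans (X ◁ ((λ_ M).inv ≫ one ▷ M) ≫ (α_ X A M).inv ≫ (inv (t X) ▷ M) ≫ (α_ A X M).hom ≫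
    (A ◁ ((β_ X M).hom ≫ (β_ X M).inv)) ≫ (λ_ (A ⊗ (X ⊗ M))).inv ≫
    (one ▷ (A ⊗ (X ⊗ M))) ≫ (A ◁ (α_ A X M).inv) ≫ (A ◁ ((β_ X A).inv ▷ M)) ≫
    (A ◁ (α_ X A M).hom) ≫ (α_ A X (A ⊗ M)).inv ≫ (t X ▷ (A ⊗ M)) ≫
    (α_ X A (A ⊗ M)).hom ≫ (X ◁ ((α_ A A M).inv ≫ (mul ▷ M) ≫ act)))
  · monoidal
  rw [Iso.hom_inv_id, MonoidalCategory.whiskerLeft_id, Category.id_comp]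
  trans (X ◁ ((λ_ M).inv ≫ one ▷ M) ≫ (α_ X A M).inv ≫ (inv (t X) ▷ M) ≫
    (λ_ ((A ⊗ X) ⊗ M)).inv ≫ (one ▷ ((A ⊗ X) ⊗ M)) ≫ (A ◁ ((β_ X A).inv ▷ M)) ≫
    (A ◁ (α_ X A M).hom) ≫ (α_ A X (A ⊗ M)).inv ≫ (t X ▷ (A ⊗ M)) ≫
    (α_ X A (A ⊗ M)).hom ≫ (X ◁ ((α_ A A M).inv ≫ (mul ▷ M) ≫ act)))
  · monoidal
  rw [← whisker_exchange_assoc one ((β_ X A).inv ▷ M)]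
  trans (((((ρ_ X).inv ≫ (X ◁ one) ≫ inv (t X)) ≫ (β_ X A).inv ≫
      (((λ_ X).inv ≫ (one ▷ X) ≫ t X) ▷ A) ≫ (α_ X A A).hom ≫ (X ◁ mul)) ▷ M) ≫
    (α_ X A M).hom ≫ (X ◁ act))
  · monoidal
  rw [hbl_lemK' one_mul compat₁ X, comp_whiskerRight, Category.assoc,
    associator_naturality_middle_assoc, ← MonoidalCategory.whiskerLeft_comp, act_one]
  monoidal

set_option maxHeartbeats 4000000 in
theorem hbl_tensor {M : C} {act : A ⊗ M ⟶ M}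
    (one_mul : (one ▷ A) ≫ mul = (λ_ A).hom)
    (compat₁ : ∀ X : C, (mul ▷ X) ≫ t X =
      (α_ A A X).hom ≫ (A ◁ (β_ X A).inv) ≫ (α_ A X A).inv ≫
        (t X ▷ A) ≫ (α_ X A A).hom ≫ (X ◁ mul))
    (act_mul : (mul ▷ M) ≫ act = (α_ A A M).hom ≫ (A ◁ act) ≫ act)
    (ht : ∀ X Y : C, t (X ⊗ Y) =
      (α_ A X Y).inv ≫ (t X ▷ Y) ≫ (α_ X A Y).hom ≫ (X ◁ t Y) ≫ (α_ X Y A).inv)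
    (X Y : C) :
    hbl A one t M act (X ⊗ Y) =
      (α_ M X Y).inv ≫ (hbl A one t M act X ▷ Y) ≫ (α_ X M Y).hom ≫
        (X ◁ hbl A one t M act Y) ≫ (α_ X Y M).inv := by
  have hact : (α_ A A M).inv ≫ mul ▷ M ≫ act = A ◁ act ≫ act := by
    rw [act_mul, Iso.inv_hom_id_assoc]
  have hZ : hbl A one t M act (X ⊗ Y) =
      ((λ_ (M ⊗ (X ⊗ Y))).inv ≫ (one ▷ (M ⊗ (X ⊗ Y)))) ≫
      (A ◁ (α_ M X Y).inv) ≫ (A ◁ ((β_ X M).inv ▷ Y)) ≫ (A ◁ (α_ X M Y).hom) ≫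
      (A ◁ (X ◁ (β_ Y M).inv)) ≫ (α_ A X (Y ⊗ M)).inv ≫ (t X ▷ (Y ⊗ M)) ≫
      (α_ X A (Y ⊗ M)).hom ≫
      (X ◁ ((λ_ (A ⊗ (Y ⊗ M))).inv ≫ (one ▷ (A ⊗ (Y ⊗ M))))) ≫
      (X ◁ (A ◁ (α_ A Y M).inv)) ≫ (X ◁ (A ◁ ((β_ Y A).inv ▷ M))) ≫
      (X ◁ (A ◁ (α_ Y A M).hom)) ≫ (X ◁ (α_ A Y (A ⊗ M)).inv) ≫
      (X ◁ (t Y ▷ (A ⊗ M))) ≫ (X ◁ (α_ Y A (A ⊗ M)).hom) ≫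
      (X ◁ (Y ◁ ((α_ A A M).inv ≫ (mul ▷ M) ≫ act))) ≫ (α_ X Y M).inv := by
    conv_lhs => rw [hbl, ht X Y, BraidedCategory.braiding_tensor_left_inv,
      hbl_t_expand one_mul compat₁ Y]
    monoidal
  rw [hZ]
  conv_lhs => rw [hact]
  -- S1: exchange β_{Y,M} with t X
  trans ((λ_ (M ⊗ (X ⊗ Y))).inv ≫ (one ▷ (M ⊗ (X ⊗ Y))) ≫ (A ◁ (α_ M X Y).inv) ≫
    (A ◁ ((β_ X M).inv ▷ Y)) ≫ (α_ A (X ⊗ M) Y).inv ≫ ((α_ A X M).inv ▷ Y) ≫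
    (α_ (A ⊗ X) M Y).hom ≫ (((A ⊗ X) ◁ (β_ Y M).inv) ≫ (t X ▷ (Y ⊗ M))) ≫
    (α_ X A (Y ⊗ M)).hom ≫
    (X ◁ ((λ_ (A ⊗ (Y ⊗ M))).inv ≫ (one ▷ (A ⊗ (Y ⊗ M))))) ≫
    (X ◁ (A ◁ (α_ A Y M).inv)) ≫ (X ◁ (A ◁ ((β_ Y A).inv ▷ M))) ≫
    (X ◁ (A ◁ (α_ Y A M).hom)) ≫ (X ◁ (α_ A Y (A ⊗ M)).inv) ≫
    (X ◁ (t Y ▷ (A ⊗ M))) ≫ (X ◁ (α_ Y A (A ⊗ M)).hom) ≫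
    (X ◁ (Y ◁ (A ◁ act))) ≫ (X ◁ (Y ◁ act)) ≫ (α_ X Y M).inv)
  · monoidal
  rw [whisker_exchange (t X) ((β_ Y M).inv)]
  -- S2: move the second unit insertion before β_{Y,M}
  trans ((λ_ (M ⊗ (X ⊗ Y))).inv ≫ (one ▷ (M ⊗ (X ⊗ Y))) ≫ (A ◁ (α_ M X Y).inv) ≫
    (A ◁ ((β_ X M).inv ▷ Y)) ≫ (α_ A (X ⊗ M) Y).inv ≫ ((α_ A X M).inv ▷ Y) ≫
    (α_ (A ⊗ X) M Y).hom ≫ (t X ▷ (M ⊗ Y)) ≫ (α_ X A (M ⊗ Y)).hom ≫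
    (X ◁ ((λ_ (A ⊗ (M ⊗ Y))).inv ≫ (𝟙_ C ◁ (A ◁ (β_ Y M).inv)) ≫
      (one ▷ (A ⊗ (Y ⊗ M))))) ≫
    (X ◁ (A ◁ (α_ A Y M).inv)) ≫ (X ◁ (A ◁ ((β_ Y A).inv ▷ M))) ≫
    (X ◁ (A ◁ (α_ Y A M).hom)) ≫ (X ◁ (α_ A Y (A ⊗ M)).inv) ≫
    (X ◁ (t Y ▷ (A ⊗ M))) ≫ (X ◁ (α_ Y A (A ⊗ M)).hom) ≫
    (X ◁ (Y ◁ (A ◁ act))) ≫ (X ◁ (Y ◁ act)) ≫ (α_ X Y M).inv)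
  · monoidal
  rw [whisker_exchange one (A ◁ (β_ Y M).inv)]
  -- S3a: exchange act with t Y
  trans ((λ_ (M ⊗ (X ⊗ Y))).inv ≫ (one ▷ (M ⊗ (X ⊗ Y))) ≫ (A ◁ (α_ M X Y).inv) ≫
    (A ◁ ((β_ X M).inv ▷ Y)) ≫ (α_ A (X ⊗ M) Y).inv ≫ ((α_ A X M).inv ▷ Y) ≫
    (α_ (A ⊗ X) M Y).hom ≫ (t X ▷ (M ⊗ Y)) ≫ (α_ X A (M ⊗ Y)).hom ≫
    (X ◁ ((λ_ (A ⊗ (M ⊗ Y))).inv ≫ (one ▷ (A ⊗ (M ⊗ Y))))) ≫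
    (X ◁ (A ◁ (A ◁ (β_ Y M).inv))) ≫
    (X ◁ (A ◁ (α_ A Y M).inv)) ≫ (X ◁ (A ◁ ((β_ Y A).inv ▷ M))) ≫
    (X ◁ (A ◁ (α_ Y A M).hom)) ≫ (X ◁ (α_ A Y (A ⊗ M)).inv) ≫
    (X ◁ ((t Y ▷ (A ⊗ M)) ≫ ((Y ⊗ A) ◁ act))) ≫
    (X ◁ (α_ Y A M).hom) ≫ (X ◁ (Y ◁ act)) ≫ (α_ X Y M).inv)
  · monoidal
  rw [← whisker_exchange (t Y) act]
  -- S3b: recombine the two inverse braidings into β_{Y, A ⊗ M}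
  trans ((λ_ (M ⊗ (X ⊗ Y))).inv ≫ (one ▷ (M ⊗ (X ⊗ Y))) ≫ (A ◁ (α_ M X Y).inv) ≫
    (A ◁ ((β_ X M).inv ▷ Y)) ≫ (α_ A (X ⊗ M) Y).inv ≫ ((α_ A X M).inv ▷ Y) ≫
    (α_ (A ⊗ X) M Y).hom ≫ (t X ▷ (M ⊗ Y)) ≫ (α_ X A (M ⊗ Y)).hom ≫
    (X ◁ ((λ_ (A ⊗ (M ⊗ Y))).inv ≫ (one ▷ (A ⊗ (M ⊗ Y))))) ≫
    (X ◁ (A ◁ (α_ A M Y).inv)) ≫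
    (X ◁ (A ◁ ((α_ A M Y).hom ≫ (A ◁ (β_ Y M).inv) ≫ (α_ A Y M).inv ≫
      ((β_ Y A).inv ▷ M) ≫ (α_ Y A M).hom))) ≫
    (X ◁ (α_ A Y (A ⊗ M)).inv) ≫ (X ◁ (((A ⊗ Y) ◁ act) ≫ (t Y ▷ M))) ≫
    (X ◁ (α_ Y A M).hom) ≫ (X ◁ (Y ◁ act)) ≫ (α_ X Y M).inv)
  · monoidal
  rw [← BraidedCategory.braiding_tensor_right_inv]
  -- S3c: braiding naturality to pull the action out of the braiding
  trans ((λ_ (M ⊗ (X ⊗ Y))).inv ≫ (one ▷ (M ⊗ (X ⊗ Y))) ≫ (A ◁ (α_ M X Y).inv) ≫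
    (A ◁ ((β_ X M).inv ▷ Y)) ≫ (α_ A (X ⊗ M) Y).inv ≫ ((α_ A X M).inv ▷ Y) ≫
    (α_ (A ⊗ X) M Y).hom ≫ (t X ▷ (M ⊗ Y)) ≫ (α_ X A (M ⊗ Y)).hom ≫
    (X ◁ ((λ_ (A ⊗ (M ⊗ Y))).inv ≫ (one ▷ (A ⊗ (M ⊗ Y))))) ≫
    (X ◁ (A ◁ (α_ A M Y).inv)) ≫
    (X ◁ (A ◁ ((β_ Y (A ⊗ M)).inv ≫ (Y ◁ act)))) ≫
    (X ◁ (α_ A Y M).inv) ≫ (X ◁ (t Y ▷ M)) ≫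
    (X ◁ (α_ Y A M).hom) ≫ (X ◁ (Y ◁ act)) ≫ (α_ X Y M).inv)
  · monoidal
  rw [← BraidedCategory.braiding_inv_naturality_left]
  -- S3d: exchange the action with the second unit insertion
  trans ((λ_ (M ⊗ (X ⊗ Y))).inv ≫ (one ▷ (M ⊗ (X ⊗ Y))) ≫ (A ◁ (α_ M X Y).inv) ≫
    (A ◁ ((β_ X M).inv ▷ Y)) ≫ (α_ A (X ⊗ M) Y).inv ≫ ((α_ A X M).inv ▷ Y) ≫
    (α_ (A ⊗ X) M Y).hom ≫ (t X ▷ (M ⊗ Y)) ≫ (α_ X A (M ⊗ Y)).hom ≫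
    (X ◁ (α_ A M Y).inv) ≫
    (X ◁ ((λ_ ((A ⊗ M) ⊗ Y)).inv ≫ ((one ▷ ((A ⊗ M) ⊗ Y)) ≫ (A ◁ (act ▷ Y))))) ≫
    (X ◁ (A ◁ (β_ Y M).inv)) ≫
    (X ◁ (α_ A Y M).inv) ≫ (X ◁ (t Y ▷ M)) ≫
    (X ◁ (α_ Y A M).hom) ≫ (X ◁ (Y ◁ act)) ≫ (α_ X Y M).inv)
  · monoidal
  rw [← whisker_exchange one (act ▷ Y)]
  conv_rhs => rw [hbl, hbl]
  monoidal

end HblAux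

/-- Let `A = (A, t, m, η)` be a half-braided algebra in a braided
monoidal category `C` and `M = (M, ▸)` a left `A`-module.  Then the family
`hbl^M_X = (id_X ⊗ ▸) ∘ (t_X ⊗ id_M) ∘ (id_A ⊗ c⁻¹_{X,M}) ∘ (η ⊗ id_{M⊗X})`
is a half-braiding for `M`: a natural isomorphism `M ⊗ - ⇒ - ⊗ M` with
`hbl^M_{X⊗Y} = (id_X ⊗ hbl^M_Y) ∘ (hbl^M_X ⊗ id_Y)`. -/
theorem hbl_isHalfBraiding
    {A : C} {mul : A ⊗ A ⟶ A} {one : 𝟙_ C ⟶ A} {t : ∀ X : C, A ⊗ X ⟶ X ⊗ A}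
    (hA : IsHalfBraidedAlg A mul one t)
    (M : C) (act : A ⊗ M ⟶ M)
    (act_one : (one ▷ M) ≫ act = (λ_ M).hom)
    (act_mul : (mul ▷ M) ≫ act = (α_ A A M).hom ≫ (A ◁ act) ≫ act) :
    IsHalfBraiding M (hbl A one t M act) := by
  refine ⟨fun X => ?_, fun {X Y} f => hbl_natural hA.hb.naturality f,
    fun X Y => hbl_tensor hA.mon.one_mul hA.compat₁ act_mul hA.hb.tensor X Y⟩
  haveI := hA.hb.isIso X
  exact ⟨ghbl A one t M act X,
    hbl_hom_inv hA.mon.one_mul hA.compat₁ act_one act_mul X,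
    hbl_inv_hom hA.mon.one_mul hA.compat₁ act_one act_mul X⟩
end

section
/- Let C be a braided monoidal category and V ∈ C an object with a left dual V*. Define on End(V) := V ⊗ V* the multiplication m = id_V ⊗ ev_V ⊗ id_{V*} : (V ⊗ V*) ⊗ (V ⊗ V*) → V ⊗ V*, the unit η = coev_V : 𝟙 → V ⊗ V*, and for each X ∈ C the morphism t_X = (c_{V,X} ⊗ id_{V*}) ∘ (id_V ⊗ c⁻¹_{X,V*}) : (V ⊗ V*) ⊗ X → X ⊗ (V ⊗ V*). Then (End(V), t, m, η) is a half-braided algebra in C. -/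
open CategoryTheory MonoidalCategory

variable {C : Type*} [Category C] [MonoidalCategory C]

variable [BraidedCategory C]

/-!
The multiplication of `V ⊗ Vᘁ` only contracts the middle factor `Vᘁ ⊗ V` along `ε`, and the
half-braiding is the Drinfeld-centre tensor product of `(V, c_{V,-})` and `(Vᘁ, c⁻¹_{-,Vᘁ})`.
So the unit laws are the zig-zag identities and associativity is the interchange law. For both
compatibilities, `X` may be braided past the middle factor before or after contracting it:
this is naturality of the braiding at the contraction `Vᘁ ⊗ V ⟶ 𝟙`, together with the
triviality of braiding with `𝟙`.
-/

section Contraction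

variable {C : Type*} [Category C] [MonoidalCategory C] {A B : C}

def contractMul (e : B ⊗ A ⟶ 𝟙_ C) : (A ⊗ B) ⊗ (A ⊗ B) ⟶ A ⊗ B :=
  (α_ A B (A ⊗ B)).hom ≫ (A ◁ ((α_ B A B).inv ≫ (e ▷ B) ≫ (λ_ B).hom))

theorem contractMul_assoc (e : B ⊗ A ⟶ 𝟙_ C) :
    (contractMul e ▷ (A ⊗ B)) ≫ contractMul e =
      (α_ _ _ _).hom ≫ ((A ⊗ B) ◁ contractMul e) ≫ contractMul e :=
  calc _ = 𝟙 _ ⊗≫ A ◁ ((e ▷ ((B ⊗ A) ⊗ B)) ≫ ((𝟙_ C) ◁ (e ▷ B))) ⊗≫ 𝟙 _ := by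
          unfold contractMul; monoidal
    _ = 𝟙 _ ⊗≫ A ◁ (((B ⊗ A) ◁ (e ▷ B)) ≫ (e ▷ ((𝟙_ C) ⊗ B))) ⊗≫ 𝟙 _ := by
          rw [← whisker_exchange]
    _ = _ := by unfold contractMul; monoidal

variable [ExactPairing A B]

theorem coevaluation_whiskerRight_contractMul :
    (η_ A B ▷ (A ⊗ B)) ≫ contractMul (ε_ A B) = (λ_ (A ⊗ B)).hom :=
  calc _ = (α_ (𝟙_ C) A B).inv ≫
          (((η_ A B ▷ A) ≫ (α_ A B A).hom ≫ (A ◁ ε_ A B)) ▷ B) ≫ ((ρ_ A).hom ▷ B) := by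
        unfold contractMul; monoidal
    _ = _ := by rw [ExactPairing.evaluation_coevaluation]; monoidal

theorem whiskerLeft_coevaluation_contractMul :
    ((A ⊗ B) ◁ η_ A B) ≫ contractMul (ε_ A B) = (ρ_ (A ⊗ B)).hom :=
  calc _ = (α_ A B (𝟙_ C)).hom ≫
          (A ◁ ((B ◁ η_ A B) ≫ (α_ B A B).inv ≫ (ε_ A B ▷ B))) ≫ (A ◁ (λ_ B).hom) := by
        unfold contractMul; monoidal
    _ = _ := by rw [ExactPairing.coevaluation_evaluation]; monoidal

theorem isMonObj_contractMul : IsMonObj (A ⊗ B) (contractMul (ε_ A B)) (η_ A B) where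
  one_mul := coevaluation_whiskerRight_contractMul
  mul_one := whiskerLeft_coevaluation_contractMul
  mul_assoc := contractMul_assoc _

end Contraction

def mixedHalfBraiding (A B X : C) : (A ⊗ B) ⊗ X ⟶ X ⊗ (A ⊗ B) :=
  (α_ A B X).hom ≫ (A ◁ (β_ X B).inv) ≫ (α_ A X B).inv ≫ ((β_ A X).hom ▷ B) ≫ (α_ X A B).hom

theorem isHalfBraiding_mixedHalfBraiding (A B : C) :
    IsHalfBraiding (A ⊗ B) (mixedHalfBraiding A B) where
  isIso X := by unfold mixedHalfBraiding; infer_instance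
  naturality f := by
    unfold mixedHalfBraiding
    rw [associator_naturality_right_assoc, ← MonoidalCategory.whiskerLeft_comp_assoc,
      BraidedCategory.braiding_inv_naturality_right, MonoidalCategory.whiskerLeft_comp_assoc,
      associator_inv_naturality_middle_assoc, ← comp_whiskerRight_assoc,
      BraidedCategory.braiding_naturality_right, comp_whiskerRight_assoc,
      Category.assoc, Category.assoc, associator_naturality_left]
    simp
  tensor X Y :=
    calc _ = 𝟙 _ ⊗≫ A ◁ ((β_ X B).inv ▷ Y) ⊗≫
            (((A ⊗ X) ◁ (β_ Y B).inv) ≫ ((β_ A X).hom ▷ (Y ⊗ B))) ⊗≫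
            X ◁ ((β_ A Y).hom ▷ B) ⊗≫ 𝟙 _ := by
          unfold mixedHalfBraiding
          rw [BraidedCategory.braiding_tensor_right_hom, BraidedCategory.braiding_tensor_left_inv]
          monoidal
      _ = 𝟙 _ ⊗≫ A ◁ ((β_ X B).inv ▷ Y) ⊗≫
            (((β_ A X).hom ▷ (B ⊗ Y)) ≫ ((X ⊗ A) ◁ (β_ Y B).inv)) ⊗≫
            X ◁ ((β_ A Y).hom ▷ B) ⊗≫ 𝟙 _ := by rw [whisker_exchange]
      _ = _ := by unfold mixedHalfBraiding; monoidal

section Compatibility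

theorem braiding_inv_comp_whiskerLeft_toUnit {Y : C} (e : Y ⟶ 𝟙_ C) (X : C) :
    (β_ X Y).inv ≫ (X ◁ e) = (e ▷ X) ≫ (λ_ X).hom ≫ (ρ_ X).inv := by
  rw [← BraidedCategory.braiding_inv_naturality_left, braiding_inv_tensorUnit_right]

theorem braiding_hom_comp_whiskerLeft_toUnit {Y : C} (e : Y ⟶ 𝟙_ C) (X : C) :
    (β_ Y X).hom ≫ (X ◁ e) = (e ▷ X) ≫ (λ_ X).hom ≫ (ρ_ X).inv := by
  rw [← BraidedCategory.braiding_naturality_left, braiding_tensorUnit_left]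

variable {A B : C} (e : B ⊗ A ⟶ 𝟙_ C) (X : C)

theorem contractMul_compat_braiding_inv :
    (contractMul e ▷ X) ≫ mixedHalfBraiding A B X =
      (α_ (A ⊗ B) (A ⊗ B) X).hom ≫ ((A ⊗ B) ◁ (β_ X (A ⊗ B)).inv) ≫
        (α_ (A ⊗ B) X (A ⊗ B)).inv ≫ (mixedHalfBraiding A B X ▷ (A ⊗ B)) ≫
          (α_ X (A ⊗ B) (A ⊗ B)).hom ≫ (X ◁ contractMul e) :=
  Eq.symm <|
  calc _ = 𝟙 _ ⊗≫ ((A ⊗ (B ⊗ A)) ◁ (β_ X B).inv) ⊗≫ (A ◁ ((β_ X (B ⊗ A)).inv ▷ B)) ⊗≫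
          (((β_ A X).hom ▷ ((B ⊗ A) ⊗ B)) ≫ ((X ⊗ A) ◁ (e ▷ B))) ⊗≫ 𝟙 _ := by
        unfold contractMul mixedHalfBraiding
        simp only [BraidedCategory.braiding_tensor_right_inv]
        monoidal
    _ = 𝟙 _ ⊗≫ ((A ⊗ (B ⊗ A)) ◁ (β_ X B).inv) ⊗≫
          (A ◁ (((β_ X (B ⊗ A)).inv ≫ (X ◁ e)) ▷ B)) ⊗≫
          ((β_ A X).hom ▷ ((𝟙_ C) ⊗ B)) ⊗≫ 𝟙 _ := by
        rw [← whisker_exchange]; monoidal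
    _ = 𝟙 _ ⊗≫ (((A ⊗ (B ⊗ A)) ◁ (β_ X B).inv) ≫ ((A ◁ e) ▷ (X ⊗ B))) ⊗≫
          ((β_ A X).hom ▷ B) ⊗≫ 𝟙 _ := by
        rw [braiding_inv_comp_whiskerLeft_toUnit]; monoidal
    _ = _ := by
        rw [whisker_exchange]; unfold contractMul mixedHalfBraiding; monoidal

theorem contractMul_compat_braiding :
    (contractMul e ▷ X) ≫ mixedHalfBraiding A B X =
      (α_ (A ⊗ B) (A ⊗ B) X).hom ≫ ((A ⊗ B) ◁ mixedHalfBraiding A B X) ≫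
        (α_ (A ⊗ B) X (A ⊗ B)).inv ≫ ((β_ (A ⊗ B) X).hom ▷ (A ⊗ B)) ≫
          (α_ X (A ⊗ B) (A ⊗ B)).hom ≫ (X ◁ contractMul e) :=
  Eq.symm <|
  calc _ = 𝟙 _ ⊗≫ ((A ⊗ (B ⊗ A)) ◁ (β_ X B).inv) ⊗≫ (A ◁ ((β_ (B ⊗ A) X).hom ▷ B)) ⊗≫
          (((β_ A X).hom ▷ ((B ⊗ A) ⊗ B)) ≫ ((X ⊗ A) ◁ (e ▷ B))) ⊗≫ 𝟙 _ := by
        unfold contractMul mixedHalfBraiding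
        simp only [BraidedCategory.braiding_tensor_left_hom]
        monoidal
    _ = 𝟙 _ ⊗≫ ((A ⊗ (B ⊗ A)) ◁ (β_ X B).inv) ⊗≫
          (A ◁ (((β_ (B ⊗ A) X).hom ≫ (X ◁ e)) ▷ B)) ⊗≫
          ((β_ A X).hom ▷ ((𝟙_ C) ⊗ B)) ⊗≫ 𝟙 _ := by
        rw [← whisker_exchange]; monoidal
    _ = 𝟙 _ ⊗≫ (((A ⊗ (B ⊗ A)) ◁ (β_ X B).inv) ≫ ((A ◁ e) ▷ (X ⊗ B))) ⊗≫
          ((β_ A X).hom ▷ B) ⊗≫ 𝟙 _ := by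
        rw [braiding_hom_comp_whiskerLeft_toUnit]; monoidal
    _ = _ := by
        rw [whisker_exchange]; unfold contractMul mixedHalfBraiding; monoidal

end Compatibility

/-- Let `V` be an object of a braided monoidal category `C` admitting a
dual `V*` (with `ev_V : V* ⊗ V ⟶ 𝟙` and `coev_V : 𝟙 ⟶ V ⊗ V*`; in Mathlib's conventions
this is `Vᘁ`).  Then the internal endomorphism object `End(V) = V ⊗ V*` equipped with the
multiplication `id_V ⊗ ev_V ⊗ id_{V*}`, the unit `coev_V`, and the half-braiding
`t_X = (c_{V,X} ⊗ id_{V*}) ∘ (id_V ⊗ c⁻¹_{X,V*})` is a half-braided algebra in `C`. -/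
theorem internalEnd_isHalfBraidedAlg (V : C) [HasRightDual V] :
    IsHalfBraidedAlg (V ⊗ Vᘁ)
      ((α_ V (Vᘁ) (V ⊗ Vᘁ)).hom ≫
        (V ◁ ((α_ (Vᘁ) V (Vᘁ)).inv ≫ ((ε_ V (Vᘁ)) ▷ (Vᘁ)) ≫ (λ_ (Vᘁ)).hom)))
      (η_ V (Vᘁ))
      (fun X => (α_ V (Vᘁ) X).hom ≫ (V ◁ (β_ X (Vᘁ)).inv) ≫ (α_ V X (Vᘁ)).inv ≫
        ((β_ V X).hom ▷ (Vᘁ)) ≫ (α_ X V (Vᘁ)).hom) :=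
  ⟨isMonObj_contractMul, isHalfBraiding_mixedHalfBraiding V Vᘁ,
    contractMul_compat_braiding_inv (ε_ V Vᘁ), contractMul_compat_braiding (ε_ V Vᘁ)⟩
end

section
/- Let C be a braided monoidal category and V, W ∈ C objects with left duals. Define Hom(V,W) := W ⊗ V* with the left End(W)-action ▸ = id_W ⊗ ev_W ⊗ id_{V*} and right End(V)-action ◂ = id_W ⊗ ev_V ⊗ id_{V*}. Then (Hom(V,W), ▸, ◂) is a bimodule over the algebras End(W) and End(V), and the two induced half-braidings hbl and hbr on it both equal X ↦ (c_{W,X} ⊗ id_{V*}) ∘ (id_W ⊗ c⁻¹_{X,V*}); in particular the bimodule is hb-compatible. -/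
/-!
`End(V)`, `End(W)` and `Hom(V,W)` are all of the form `A ⊗ D`, and `endMul`, `homActLeft` and
`homActRight` are all the contraction `(A ⊗ Y) ⊗ (X ⊗ D) ⟶ A ⊗ D` of the middle pair by
`ε_ X Y`. The bimodule axioms are therefore the associativity of contraction and the zigzag
identities. For the half-braidings, the contraction intertwines the half-braiding
`(c_{A,Z} ⊗ id) ∘ (id ⊗ c⁻¹_{Z,D})` with the one built from the half-braidings of its two
factors, provided the two contracted strands cross `Z` the same way: both by `c⁻¹` in `hbl`,
both by `c` in `hbr`. Naturality of the braiding in `ε` then removes them. What remains of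
`hbl` and `hbr` is the unit law of the action, which is the identity.
-/

open CategoryTheory MonoidalCategory

variable {C : Type*} [Category C] [MonoidalCategory C] [BraidedCategory C]

section InternalHom

variable (V W : C) [HasRightDual V] [HasRightDual W]

/-- The multiplication of the internal endomorphism algebra `End(V) = V ⊗ V*`. -/
noncomputable def endMul : (V ⊗ Vᘁ) ⊗ (V ⊗ Vᘁ) ⟶ V ⊗ Vᘁ :=
  (α_ V (Vᘁ) (V ⊗ Vᘁ)).hom ≫
    (V ◁ ((α_ (Vᘁ) V (Vᘁ)).inv ≫ ((ε_ V (Vᘁ)) ▷ (Vᘁ)) ≫ (λ_ (Vᘁ)).hom))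

/-- The canonical half-braiding of `End(V) = V ⊗ V*`:
`t_X = (c_{V,X} ⊗ id_{V*}) ∘ (id_V ⊗ c⁻¹_{X,V*})`. -/
noncomputable def endHalfBraiding (X : C) : (V ⊗ Vᘁ) ⊗ X ⟶ X ⊗ (V ⊗ Vᘁ) :=
  (α_ V (Vᘁ) X).hom ≫ (V ◁ (β_ X (Vᘁ)).inv) ≫ (α_ V X (Vᘁ)).inv ≫
    ((β_ V X).hom ▷ (Vᘁ)) ≫ (α_ X V (Vᘁ)).hom

/-- The left action of `End(W)` on the internal hom `Hom(V,W) = W ⊗ V*`,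
`▸ = id_W ⊗ ev_W ⊗ id_{V*}`. -/
noncomputable def homActLeft : (W ⊗ Wᘁ) ⊗ (W ⊗ Vᘁ) ⟶ W ⊗ Vᘁ :=
  (α_ W (Wᘁ) (W ⊗ Vᘁ)).hom ≫
    (W ◁ ((α_ (Wᘁ) W (Vᘁ)).inv ≫ ((ε_ W (Wᘁ)) ▷ (Vᘁ)) ≫ (λ_ (Vᘁ)).hom))

/-- The right action of `End(V)` on `Hom(V,W) = W ⊗ V*`, `◂ = id_W ⊗ ev_V ⊗ id_{V*}`. -/
noncomputable def homActRight : (W ⊗ Vᘁ) ⊗ (V ⊗ Vᘁ) ⟶ W ⊗ Vᘁ :=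
  (α_ W (Vᘁ) (V ⊗ Vᘁ)).hom ≫
    (W ◁ ((α_ (Vᘁ) V (Vᘁ)).inv ≫ ((ε_ V (Vᘁ)) ▷ (Vᘁ)) ≫ (λ_ (Vᘁ)).hom))

/-- The half-braiding `hbl` on `Hom(V,W)` induced by the left `End(W)`-action:
`hbl_X = (id_X ⊗ ▸) ∘ (t_X ⊗ id) ∘ (id ⊗ c⁻¹) ∘ (η ⊗ id)`. -/
noncomputable def homHbl (X : C) : (W ⊗ Vᘁ) ⊗ X ⟶ X ⊗ (W ⊗ Vᘁ) :=
  (λ_ ((W ⊗ Vᘁ) ⊗ X)).inv ≫ ((η_ W (Wᘁ)) ▷ ((W ⊗ Vᘁ) ⊗ X)) ≫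
    ((W ⊗ Wᘁ) ◁ (β_ X (W ⊗ Vᘁ)).inv) ≫ (α_ (W ⊗ Wᘁ) X (W ⊗ Vᘁ)).inv ≫
      (endHalfBraiding W X ▷ (W ⊗ Vᘁ)) ≫ (α_ X (W ⊗ Wᘁ) (W ⊗ Vᘁ)).hom ≫
        (X ◁ homActLeft V W)

/-- The half-braiding `hbr` on `Hom(V,W)` induced by the right `End(V)`-action. -/
noncomputable def homHbr (X : C) : (W ⊗ Vᘁ) ⊗ X ⟶ X ⊗ (W ⊗ Vᘁ) :=
  ((W ⊗ Vᘁ) ◁ ((λ_ X).inv ≫ ((η_ V (Vᘁ)) ▷ X) ≫ endHalfBraiding V X)) ≫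
    (α_ (W ⊗ Vᘁ) X (V ⊗ Vᘁ)).inv ≫ ((β_ (W ⊗ Vᘁ) X).hom ▷ (V ⊗ Vᘁ)) ≫
      (α_ X (W ⊗ Vᘁ) (V ⊗ Vᘁ)).hom ≫ (X ◁ homActRight V W)

end InternalHom

section Contraction

variable {C : Type*} [Category C] [MonoidalCategory C]

noncomputable def contractMiddle (A D X Y : C) [ExactPairing X Y] :
    (A ⊗ Y) ⊗ (X ⊗ D) ⟶ A ⊗ D :=
  (α_ A Y (X ⊗ D)).hom ≫ (A ◁ ((α_ Y X D).inv ≫ (ε_ X Y ▷ D) ≫ (λ_ D).hom))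

theorem coevaluation_whiskerRight_contractMiddle (D X Y : C) [ExactPairing X Y] :
    (η_ X Y ▷ (X ⊗ D)) ≫ contractMiddle X D X Y = (λ_ (X ⊗ D)).hom := by
  calc (η_ X Y ▷ (X ⊗ D)) ≫ contractMiddle X D X Y
      = 𝟙 _ ⊗≫ ((η_ X Y ▷ X ⊗≫ X ◁ ε_ X Y) ▷ D) ⊗≫ 𝟙 _ := by
        simp only [contractMiddle]; monoidal
    _ = (λ_ (X ⊗ D)).hom := by rw [ExactPairing.evaluation_coevaluation'']; monoidal

theorem whiskerLeft_coevaluation_contractMiddle (A X Y : C) [ExactPairing X Y] :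
    ((A ⊗ Y) ◁ η_ X Y) ≫ contractMiddle A Y X Y = (ρ_ (A ⊗ Y)).hom := by
  calc ((A ⊗ Y) ◁ η_ X Y) ≫ contractMiddle A Y X Y
      = 𝟙 _ ⊗≫ A ◁ (Y ◁ η_ X Y ⊗≫ ε_ X Y ▷ Y) ⊗≫ 𝟙 _ := by
        simp only [contractMiddle]; monoidal
    _ = (ρ_ (A ⊗ Y)).hom := by rw [ExactPairing.coevaluation_evaluation'']; monoidal

theorem contractMiddle_assoc (A D X₁ Y₁ X₂ Y₂ : C) [ExactPairing X₁ Y₁]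
    [ExactPairing X₂ Y₂] :
    (contractMiddle A Y₂ X₁ Y₁ ▷ (X₂ ⊗ D)) ≫ contractMiddle A D X₂ Y₂ =
      (α_ (A ⊗ Y₁) (X₁ ⊗ Y₂) (X₂ ⊗ D)).hom ≫ ((A ⊗ Y₁) ◁ contractMiddle X₁ D X₂ Y₂) ≫
        contractMiddle A D X₁ Y₁ := by
  calc (contractMiddle A Y₂ X₁ Y₁ ▷ (X₂ ⊗ D)) ≫ contractMiddle A D X₂ Y₂
      = 𝟙 _ ⊗≫ A ◁ ((ε_ X₁ Y₁ ⊗ₘ ε_ X₂ Y₂) ▷ D) ⊗≫ 𝟙 _ := by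
        rw [MonoidalCategory.tensorHom_def]; simp only [contractMiddle]; monoidal
    _ = _ := by
        rw [tensorHom_def']; simp only [contractMiddle]; monoidal

end Contraction

section MixedBraiding

variable {C : Type*} [Category C] [MonoidalCategory C] [BraidedCategory C]

open BraidedCategory

noncomputable def mixedBraiding (A D X : C) : (A ⊗ D) ⊗ X ⟶ X ⊗ (A ⊗ D) :=
  (α_ A D X).hom ≫ (A ◁ (β_ X D).inv) ≫ (α_ A X D).inv ≫ ((β_ A X).hom ▷ D) ≫ (α_ X A D).hom

theorem contractMiddle_whiskerRight_mixedBraiding_left (A D X Y Z : C)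
    [ExactPairing X Y] :
    (contractMiddle A D X Y ▷ Z) ≫ mixedBraiding A D Z =
      (α_ (A ⊗ Y) (X ⊗ D) Z).hom ≫ ((A ⊗ Y) ◁ (β_ Z (X ⊗ D)).inv) ≫
        (α_ (A ⊗ Y) Z (X ⊗ D)).inv ≫ (mixedBraiding A Y Z ▷ (X ⊗ D)) ≫
          (α_ Z (A ⊗ Y) (X ⊗ D)).hom ≫ (Z ◁ contractMiddle A D X Y) := by
  symm
  calc _ = 𝟙 _ ⊗≫ A ◁ Y ◁ X ◁ (β_ Z D).inv ⊗≫ A ◁ Y ◁ ((β_ Z X).inv ▷ D)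
        ⊗≫ A ◁ ((β_ Z Y).inv ▷ (X ⊗ D))
        ⊗≫ ((β_ A Z).hom ▷ ((Y ⊗ X) ⊗ D) ≫ (Z ⊗ A) ◁ (ε_ X Y ▷ D)) ⊗≫ 𝟙 _ := by
        simp only [contractMiddle, mixedBraiding, braiding_tensor_right_inv]; monoidal
    _ = 𝟙 _ ⊗≫ A ◁ Y ◁ X ◁ (β_ Z D).inv
        ⊗≫ A ◁ (((β_ Z (Y ⊗ X)).inv ≫ Z ◁ ε_ X Y) ▷ D) ⊗≫ (β_ A Z).hom ▷ D ⊗≫ 𝟙 _ := by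
        rw [← whisker_exchange, braiding_tensor_right_inv]; monoidal
    _ = 𝟙 _ ⊗≫ A ◁ ((Y ⊗ X) ◁ (β_ Z D).inv ≫ ε_ X Y ▷ (Z ⊗ D))
        ⊗≫ (β_ A Z).hom ▷ D ⊗≫ 𝟙 _ := by
        rw [← braiding_inv_naturality_left, braiding_inv_tensorUnit_right]; monoidal
    _ = _ := by
        rw [whisker_exchange]; simp only [contractMiddle, mixedBraiding]; monoidal

theorem contractMiddle_whiskerRight_mixedBraiding_right (A D X Y Z : C)
    [ExactPairing X Y] :
    (contractMiddle A D X Y ▷ Z) ≫ mixedBraiding A D Z =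
      (α_ (A ⊗ Y) (X ⊗ D) Z).hom ≫ ((A ⊗ Y) ◁ mixedBraiding X D Z) ≫
        (α_ (A ⊗ Y) Z (X ⊗ D)).inv ≫ ((β_ (A ⊗ Y) Z).hom ▷ (X ⊗ D)) ≫
          (α_ Z (A ⊗ Y) (X ⊗ D)).hom ≫ (Z ◁ contractMiddle A D X Y) := by
  symm
  calc _ = 𝟙 _ ⊗≫ A ◁ Y ◁ X ◁ (β_ Z D).inv ⊗≫ A ◁ Y ◁ ((β_ X Z).hom ▷ D)
        ⊗≫ A ◁ ((β_ Y Z).hom ▷ (X ⊗ D))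
        ⊗≫ ((β_ A Z).hom ▷ ((Y ⊗ X) ⊗ D) ≫ (Z ⊗ A) ◁ (ε_ X Y ▷ D)) ⊗≫ 𝟙 _ := by
        simp only [contractMiddle, mixedBraiding, braiding_tensor_left_hom]; monoidal
    _ = 𝟙 _ ⊗≫ A ◁ Y ◁ X ◁ (β_ Z D).inv
        ⊗≫ A ◁ (((β_ (Y ⊗ X) Z).hom ≫ Z ◁ ε_ X Y) ▷ D) ⊗≫ (β_ A Z).hom ▷ D ⊗≫ 𝟙 _ := by
        rw [← whisker_exchange, braiding_tensor_left_hom]; monoidal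
    _ = 𝟙 _ ⊗≫ A ◁ ((Y ⊗ X) ◁ (β_ Z D).inv ≫ ε_ X Y ▷ (Z ⊗ D))
        ⊗≫ (β_ A Z).hom ▷ D ⊗≫ 𝟙 _ := by
        rw [← braiding_naturality_left, braiding_tensorUnit_left]; monoidal
    _ = _ := by
        rw [whisker_exchange]; simp only [contractMiddle, mixedBraiding]; monoidal

end MixedBraiding

theorem homHbl_eq_mixedBraiding (V W : C) [HasRightDual V] [HasRightDual W] (X : C) :
    homHbl V W X = mixedBraiding W Vᘁ X := by
  have hCentral := contractMiddle_whiskerRight_mixedBraiding_left W Vᘁ W Wᘁ X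
  have hUnit := coevaluation_whiskerRight_contractMiddle Vᘁ W Wᘁ
  calc homHbl V W X
      = (λ_ _).inv ≫ (η_ W Wᘁ ▷ _) ≫ (α_ _ _ _).inv ≫ (contractMiddle W Vᘁ W Wᘁ ▷ X) ≫
          mixedBraiding W Vᘁ X := by
        rw [hCentral]; simp only [homHbl, Iso.inv_hom_id_assoc]; rfl
    _ = ((λ_ _).inv ≫ (η_ W Wᘁ ▷ _) ≫ contractMiddle W Vᘁ W Wᘁ) ▷ X ≫
          mixedBraiding W Vᘁ X := by
        monoidal
    _ = mixedBraiding W Vᘁ X := by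
        rw [hUnit]; simp

theorem homHbr_eq_mixedBraiding (V W : C) [HasRightDual V] (X : C) :
    homHbr V W X = mixedBraiding W Vᘁ X := by
  have hCentral := contractMiddle_whiskerRight_mixedBraiding_right W Vᘁ V Vᘁ X
  have hUnit := whiskerLeft_coevaluation_contractMiddle W V Vᘁ
  calc homHbr V W X
      = ((W ⊗ Vᘁ) ◁ (λ_ X).inv) ≫ ((W ⊗ Vᘁ) ◁ (η_ V Vᘁ ▷ X)) ≫ (α_ _ _ _).inv ≫
          (contractMiddle W Vᘁ V Vᘁ ▷ X) ≫ mixedBraiding W Vᘁ X := by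
        rw [hCentral]
        simp only [homHbr, Iso.inv_hom_id_assoc, whiskerLeft_comp, Category.assoc]; rfl
    _ = (((W ⊗ Vᘁ) ◁ (λ_ X).inv) ≫ (α_ _ _ _).inv ≫
          (((W ⊗ Vᘁ) ◁ η_ V Vᘁ) ≫ contractMiddle W Vᘁ V Vᘁ) ▷ X) ≫ mixedBraiding W Vᘁ X := by
        monoidal
    _ = mixedBraiding W Vᘁ X := by
        rw [hUnit]; simp

/-- Let `V, W` be objects with duals in a braided monoidal category `C`.
Then `Hom(V,W) = W ⊗ V*`, with the left `End(W)`-action `id_W ⊗ ev_W ⊗ id_{V*}` and the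
right `End(V)`-action `id_W ⊗ ev_V ⊗ id_{V*}`, is a bimodule over the algebras `End(W)`
and `End(V)`, and the two induced half-braidings `hbl`, `hbr` on it both equal
`X ↦ (c_{W,X} ⊗ id_{V*}) ∘ (id_W ⊗ c⁻¹_{X,V*})`; in particular the bimodule is
hb-compatible. -/
theorem internalHom_bimodule_hbCompatible (V W : C) [HasRightDual V] [HasRightDual W] :
    -- `Hom(V,W)` is a left `End(W)`-module:
    (((η_ W (Wᘁ)) ▷ (W ⊗ Vᘁ)) ≫ homActLeft V W = (λ_ (W ⊗ Vᘁ)).hom) ∧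
    ((endMul W ▷ (W ⊗ Vᘁ)) ≫ homActLeft V W =
      (α_ (W ⊗ Wᘁ) (W ⊗ Wᘁ) (W ⊗ Vᘁ)).hom ≫ ((W ⊗ Wᘁ) ◁ homActLeft V W) ≫
        homActLeft V W) ∧
    -- `Hom(V,W)` is a right `End(V)`-module:
    (((W ⊗ Vᘁ) ◁ (η_ V (Vᘁ))) ≫ homActRight V W = (ρ_ (W ⊗ Vᘁ)).hom) ∧
    (((W ⊗ Vᘁ) ◁ endMul V) ≫ homActRight V W =
      (α_ (W ⊗ Vᘁ) (V ⊗ Vᘁ) (V ⊗ Vᘁ)).inv ≫ (homActRight V W ▷ (V ⊗ Vᘁ)) ≫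
        homActRight V W) ∧
    -- the two actions commute:
    ((homActLeft V W ▷ (V ⊗ Vᘁ)) ≫ homActRight V W =
      (α_ (W ⊗ Wᘁ) (W ⊗ Vᘁ) (V ⊗ Vᘁ)).hom ≫ ((W ⊗ Wᘁ) ◁ homActRight V W) ≫
        homActLeft V W) ∧
    -- both induced half-braidings are `(c_{W,X} ⊗ id) ∘ (id ⊗ c⁻¹_{X,V*})`:
    (∀ X : C, homHbl V W X =
      (α_ W (Vᘁ) X).hom ≫ (W ◁ (β_ X (Vᘁ)).inv) ≫ (α_ W X (Vᘁ)).inv ≫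
        ((β_ W X).hom ▷ (Vᘁ)) ≫ (α_ X W (Vᘁ)).hom) ∧
    (∀ X : C, homHbr V W X =
      (α_ W (Vᘁ) X).hom ≫ (W ◁ (β_ X (Vᘁ)).inv) ≫ (α_ W X (Vᘁ)).inv ≫
        ((β_ W X).hom ▷ (Vᘁ)) ≫ (α_ X W (Vᘁ)).hom) :=
  ⟨coevaluation_whiskerRight_contractMiddle Vᘁ W Wᘁ,
    contractMiddle_assoc W Vᘁ W Wᘁ W Wᘁ,
    whiskerLeft_coevaluation_contractMiddle W V Vᘁ,
    (Iso.eq_inv_comp _).2 (contractMiddle_assoc W Vᘁ V Vᘁ V Vᘁ).symm,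
    contractMiddle_assoc W Vᘁ W Wᘁ V Vᘁ,
    homHbl_eq_mixedBraiding V W,
    homHbr_eq_mixedBraiding V W⟩
end

section
/- Let k be a field and C a k-coalgebra. A right C-comodule is a compact object of the category of right C-comodules if and only if it is finite-dimensional over k. -/
open CategoryTheory CategoryTheory.Limits TensorProduct Opposite

universe u

variable (k : Type u) [Field k] (Q : Type u) [AddCommGroup Q] [Module k Q] [Coalgebra k Q]

/-- A right `Q`-comodule: a `k`-vector space with a coassociative counital coaction
`V → V ⊗ Q`. -/
structure Comod where
  carrier : Type u
  [isAddCommGroup : AddCommGroup carrier]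
  [isModule : Module k carrier]
  coact : carrier →ₗ[k] carrier ⊗[k] Q
  coassoc : (TensorProduct.assoc k carrier Q Q).toLinearMap ∘ₗ
      LinearMap.rTensor Q coact ∘ₗ coact =
    LinearMap.lTensor carrier Coalgebra.comul ∘ₗ coact
  counital : (TensorProduct.rid k carrier).toLinearMap ∘ₗ
      LinearMap.lTensor carrier Coalgebra.counit ∘ₗ coact = LinearMap.id

attribute [instance] Comod.isAddCommGroup Comod.isModule

variable {k Q}

/-- A morphism of right `Q`-comodules. -/
@[ext] structure ComodHom (M N : Comod k Q) where
  toLinearMap : M.carrier →ₗ[k] N.carrier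
  compat : N.coact ∘ₗ toLinearMap = LinearMap.rTensor Q toLinearMap ∘ₗ M.coact

variable (k Q)

instance : Category (Comod k Q) where
  Hom M N := ComodHom M N
  id M := ⟨LinearMap.id, by simp⟩
  comp {M N O} f g :=
    ⟨g.toLinearMap ∘ₗ f.toLinearMap, by
      ext x
      have h1 := LinearMap.congr_fun g.compat (f.toLinearMap x)
      have h2 := LinearMap.congr_fun f.compat x
      simp only [LinearMap.comp_apply] at h1 h2 ⊢
      rw [h1, h2, ← LinearMap.comp_apply, ← LinearMap.rTensor_comp]⟩
  id_comp f := ComodHom.ext (by simp)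
  comp_id f := ComodHom.ext (by simp)
  assoc f g h := ComodHom.ext (by simp [LinearMap.comp_assoc])

/-- An object `K` of a category is compact (finitely presentable) if `Hom(K, -)` preserves
filtered colimits. -/
def IsCompactObj {C : Type (u + 1)} [Category.{u} C] (K : C) : Prop :=
  ∀ (J : Type u) (_ : SmallCategory J) (_ : IsFiltered J),
    Nonempty (PreservesColimitsOfShape J (coyoneda.obj (op K)))

/-!
Every comodule is the directed union of its finite-dimensional subcomodules: writing
`ρ x = ∑ mᵢ ⊗ bᵢ` in a basis `(bᵢ)` of `Q`, coassociativity shows that each `ρ mᵢ` lies in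
`span {mᵢ} ⊗ Q`, and the counit shows `x ∈ span {mᵢ}`. This union is a filtered colimit in
`Comod k Q`, so for compact `M` the identity of `M` factors through a finite-dimensional
subcomodule.

Conversely, colimits of comodules are computed on the underlying vector spaces. For
finite-dimensional `M` and a filtered colimit, a comodule map `M → colim Fⱼ` factors linearly
through some `Fⱼ`; the failure of that factorisation to be colinear is a linear map
`M → Fⱼ ⊗ Q` that vanishes in `colim Fⱼ ⊗ Q = colim (Fⱼ ⊗ Q)`, hence already at a later stage.
-/

section TensorProduct

variable {R A B C D : Type*} [CommSemiring R] [AddCommMonoid A] [Module R A]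
  [AddCommMonoid B] [Module R B] [AddCommMonoid C] [Module R C] [AddCommMonoid D] [Module R D]

theorem LinearMap.rid_comp_rTensor (f : A →ₗ[R] B) :
    (TensorProduct.rid R B).toLinearMap ∘ₗ f.rTensor R =
      f ∘ₗ (TensorProduct.rid R A).toLinearMap :=
  TensorProduct.ext' fun _ _ => by simp

theorem LinearMap.assoc_comp_rTensor_rTensor (f : A →ₗ[R] B) :
    (TensorProduct.assoc R B C C).toLinearMap ∘ₗ (f.rTensor C).rTensor C =
      f.rTensor (C ⊗[R] C) ∘ₗ (TensorProduct.assoc R A C C).toLinearMap := by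
  rw [LinearMap.rTensor_tensor]
  ext
  simp

theorem LinearMap.lTensor_mem_range_rTensor_subtype {N : Submodule R A} (g : C →ₗ[R] D)
    {x : A ⊗[R] C} (hx : x ∈ range (N.subtype.rTensor C)) :
    g.lTensor A x ∈ range (N.subtype.rTensor D) := by
  obtain ⟨y, rfl⟩ := hx
  exact ⟨g.lTensor N y, by
    rw [← comp_apply, ← comp_apply, rTensor_comp_lTensor, lTensor_comp_rTensor]⟩

theorem LinearMap.rid_lTensor_mem_of_mem_range_rTensor_subtype {N : Submodule R A}
    (g : C →ₗ[R] R) {x : A ⊗[R] C} (hx : x ∈ range (N.subtype.rTensor C)) :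
    TensorProduct.rid R A (g.lTensor A x) ∈ N := by
  obtain ⟨y, rfl⟩ := hx
  rw [← comp_apply (g.lTensor A), lTensor_comp_rTensor, ← rTensor_comp_lTensor, comp_apply,
    ← LinearEquiv.coe_coe, ← comp_apply, rid_comp_rTensor]
  exact Submodule.coe_mem _

variable {κ : Type*} [DecidableEq κ] (b : Module.Basis κ R D)

theorem TensorProduct.equivFinsuppOfBasisRight_rTensor_apply (f : A →ₗ[R] B) (x : A ⊗[R] D)
    (i : κ) :
    equivFinsuppOfBasisRight b (f.rTensor D x) i = f (equivFinsuppOfBasisRight b x i) := by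
  induction x <;> simp_all

theorem TensorProduct.equivFinsuppOfBasisRight_assoc_symm_apply (x : A ⊗[R] (C ⊗[R] D))
    (i : κ) :
    equivFinsuppOfBasisRight b ((TensorProduct.assoc R A C D).symm x) i =
      (Finsupp.lapply i ∘ₗ (equivFinsuppOfBasisRight b).toLinearMap).lTensor A x := by
  induction x with
  | zero => simp
  | add x y hx hy => simp_all
  | tmul a y => induction y <;> simp_all [tmul_add]

theorem TensorProduct.mem_range_rTensor_subtype_of_forall_mem {N : Submodule R A}
    {x : A ⊗[R] D} (h : ∀ i, equivFinsuppOfBasisRight b x i ∈ N) :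
    x ∈ LinearMap.range (N.subtype.rTensor D) := by
  rw [← (equivFinsuppOfBasisRight b).symm_apply_apply x, equivFinsuppOfBasisRight_symm_apply]
  exact Submodule.finsuppSum_mem _ _ _ _ fun i _ => ⟨⟨_, h i⟩ ⊗ₜ b i, rfl⟩

end TensorProduct

section CoactionNaturality

variable {R A B C D : Type*} [CommSemiring R] [AddCommMonoid A] [Module R A]
  [AddCommMonoid B] [Module R B] [AddCommMonoid C] [Module R C] [AddCommMonoid D] [Module R D]
  {ρA : A →ₗ[R] A ⊗[R] C} {ρB : B →ₗ[R] B ⊗[R] C} {φ : A →ₗ[R] B}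
  (h : ρB ∘ₗ φ = φ.rTensor C ∘ₗ ρA)
include h

theorem assoc_comp_rTensor_comp_of_comp_eq :
    ((TensorProduct.assoc R B C C).toLinearMap ∘ₗ ρB.rTensor C ∘ₗ ρB) ∘ₗ φ =
      φ.rTensor (C ⊗[R] C) ∘ₗ (TensorProduct.assoc R A C C).toLinearMap ∘ₗ ρA.rTensor C ∘ₗ ρA := by
  rw [LinearMap.comp_assoc, LinearMap.comp_assoc, h, ← LinearMap.comp_assoc ρA,
    ← LinearMap.rTensor_comp, h, LinearMap.rTensor_comp, ← LinearMap.comp_assoc,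
    ← LinearMap.comp_assoc, LinearMap.assoc_comp_rTensor_rTensor]
  simp only [LinearMap.comp_assoc]

theorem lTensor_comp_of_comp_eq (g : C →ₗ[R] D) :
    (g.lTensor B ∘ₗ ρB) ∘ₗ φ = φ.rTensor D ∘ₗ g.lTensor A ∘ₗ ρA := by
  rw [LinearMap.comp_assoc, h, ← LinearMap.comp_assoc, LinearMap.lTensor_comp_rTensor,
    ← LinearMap.rTensor_comp_lTensor, LinearMap.comp_assoc]

theorem rid_comp_lTensor_comp_of_comp_eq (g : C →ₗ[R] R) :
    ((TensorProduct.rid R B).toLinearMap ∘ₗ g.lTensor B ∘ₗ ρB) ∘ₗ φ =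
      φ ∘ₗ (TensorProduct.rid R A).toLinearMap ∘ₗ g.lTensor A ∘ₗ ρA := by
  rw [LinearMap.comp_assoc, lTensor_comp_of_comp_eq h, ← LinearMap.comp_assoc,
    LinearMap.rid_comp_rTensor, LinearMap.comp_assoc]

end CoactionNaturality

namespace CategoryTheory.Limits.Types.FilteredColimit

variable {J : Type*} [Category* J] [IsFiltered J] {G : J ⥤ Type*} {c : Cocone G}
  (hc : IsColimit c) {ι : Type*} [Finite ι]
include hc

theorem exists_ι_app_eq_of_finite (v : ι → c.pt) :
    ∃ (j : J) (x : ι → G.obj j), ∀ i, c.ι.app j (x i) = v i := by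
  classical
  cases nonempty_fintype ι
  choose j x hx using fun i => Types.jointly_surjective_of_isColimit hc (v i)
  obtain ⟨S, hS⟩ := IsFiltered.sup_objs_exists (Finset.univ.image j)
  have toS (i : ι) : j i ⟶ S := (hS (Finset.mem_image_of_mem j (Finset.mem_univ i))).some
  exact ⟨S, fun i => G.map (toS i) (x i), fun i => by rw [← hx i, ← c.w (toS i)]; rfl⟩

theorem exists_map_eq_of_finite {j : J} (x y : ι → G.obj j)
    (h : ∀ i, c.ι.app j (x i) = c.ι.app j (y i)) :
    ∃ (j' : J) (u : j ⟶ j'), ∀ i, G.map u (x i) = G.map u (y i) := by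
  choose k f hf using fun i => (isColimit_eq_iff' hc _ _).mp (h i)
  obtain ⟨j', u, g, hg⟩ := IsFiltered.wideSpan f
  refine ⟨j', u, fun i => ?_⟩
  rw [← hg i, G.map_comp]
  simp [hf i]

end CategoryTheory.Limits.Types.FilteredColimit

namespace ModuleCat

theorem linearMap_ext_of_isColimit {R : Type u} [Ring R] {J : Type*} [Category* J]
    {G : J ⥤ ModuleCat.{u} R} {c : Cocone G} (hc : IsColimit c) {X : Type u} [AddCommGroup X]
    [Module R X] {f g : c.pt →ₗ[R] X} (h : ∀ j, f ∘ₗ (c.ι.app j).hom = g ∘ₗ (c.ι.app j).hom) :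
    f = g :=
  congrArg Hom.hom (hc.hom_ext (f := ofHom f) (f' := ofHom g) fun j => hom_ext (h j))

variable {R : Type u} {J : Type u} [SmallCategory J] [IsFiltered J]
  {V : Type*} [AddCommGroup V]

theorem exists_comp_eq_of_isColimit [CommRing R] {G : J ⥤ ModuleCat.{u} R} {c : Cocone G}
    (hc : IsColimit c) [Module R V] [Module.Free R V] [Module.Finite R V] (f : V →ₗ[R] c.pt) :
    ∃ (j : J) (g : V →ₗ[R] G.obj j), (c.ι.app j).hom ∘ₗ g = f := by
  let b := Module.Free.chooseBasis R V
  obtain ⟨j, x, hx⟩ := Types.FilteredColimit.exists_ι_app_eq_of_finite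
    (isColimitOfPreserves (forget (ModuleCat R)) hc) (fun i => f (b i))
  exact ⟨j, b.constr R x, b.ext fun i => by simpa using hx i⟩

theorem exists_map_comp_eq_of_isColimit [Ring R] {G : J ⥤ ModuleCat.{u} R} {c : Cocone G}
    (hc : IsColimit c) [Module R V] [Module.Finite R V] {j : J} (g₁ g₂ : V →ₗ[R] G.obj j)
    (h : (c.ι.app j).hom ∘ₗ g₁ = (c.ι.app j).hom ∘ₗ g₂) :
    ∃ (j' : J) (u : j ⟶ j'), (G.map u).hom ∘ₗ g₁ = (G.map u).hom ∘ₗ g₂ := by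
  obtain ⟨n, s, hs⟩ := Module.Finite.exists_fin (R := R) (M := V)
  obtain ⟨j', u, hu⟩ := Types.FilteredColimit.exists_map_eq_of_finite
    (isColimitOfPreserves (forget (ModuleCat R)) hc) (fun i => g₁ (s i)) (fun i => g₂ (s i))
    (fun i => congr($h (s i)))
  exact ⟨j', u, LinearMap.ext_on_range hs hu⟩

end ModuleCat

namespace Comod

variable {k Q}

variable (k Q) in
def forget : Comod k Q ⥤ ModuleCat.{u} k where
  obj A := ModuleCat.of k A.carrier
  map f := ModuleCat.ofHom f.toLinearMap

instance : (forget k Q).Faithful where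
  map_injective h := ComodHom.ext (congrArg ModuleCat.Hom.hom h)

instance {J : Type*} [Category* J] (F : J ⥤ Comod k Q) : ReflectsColimit F (forget k Q) where
  reflects {c} hc := ⟨{
    desc s :=
      let d : c.pt.carrier →ₗ[k] s.pt.carrier := (hc.desc ((forget k Q).mapCocone s)).hom
      have hd (j : J) : d ∘ₗ (c.ι.app j).toLinearMap = (s.ι.app j).toLinearMap :=
        congrArg ModuleCat.Hom.hom (hc.fac ((forget k Q).mapCocone s) j)
      ⟨d, ModuleCat.linearMap_ext_of_isColimit hc fun j => by
        change (s.pt.coact ∘ₗ d) ∘ₗ (c.ι.app j).toLinearMap =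
          (d.rTensor Q ∘ₗ c.pt.coact) ∘ₗ (c.ι.app j).toLinearMap
        rw [LinearMap.comp_assoc, hd, LinearMap.comp_assoc]
        refine (s.ι.app j).compat.trans ?_
        rw [← hd, LinearMap.rTensor_comp, LinearMap.comp_assoc]
        exact congrArg _ (c.ι.app j).compat.symm⟩
    fac s j := (forget k Q).map_injective (hc.fac _ j)
    uniq s m hm := (forget k Q).map_injective
      (hc.uniq ((forget k Q).mapCocone s) ((forget k Q).map m)
        fun j => congrArg (forget k Q).map (hm j)) }⟩

section Colimits

variable {J : Type u} [SmallCategory J] (F : J ⥤ Comod k Q)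

noncomputable abbrev colimitModule : ModuleCat.{u} k := colimit (F ⋙ forget k Q)

noncomputable abbrev colimitι (j : J) : (F.obj j).carrier →ₗ[k] colimitModule F :=
  (colimit.ι (F ⋙ forget k Q) j).hom

theorem colimitι_comp_map {j j' : J} (f : j ⟶ j') :
    colimitι F j' ∘ₗ (F.map f).toLinearMap = colimitι F j :=
  congr($(colimit.w (F ⋙ forget k Q) f).hom)

theorem colimitModule_linearMap_ext {X : Type u} [AddCommGroup X] [Module k X]
    {f g : colimitModule F →ₗ[k] X} (h : ∀ j, f ∘ₗ colimitι F j = g ∘ₗ colimitι F j) : f = g :=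
  ModuleCat.linearMap_ext_of_isColimit (colimit.isColimit _) h

noncomputable def colimitCoactCocone : Cocone (F ⋙ forget k Q) where
  pt := ModuleCat.of k (colimitModule F ⊗[k] Q)
  ι.app j := ModuleCat.ofHom ((colimitι F j).rTensor Q ∘ₗ (F.obj j).coact)
  ι.naturality j j' f := by
    ext1
    change (colimitι F j').rTensor Q ∘ₗ (F.obj j').coact ∘ₗ (F.map f).toLinearMap =
      (colimitι F j).rTensor Q ∘ₗ (F.obj j).coact
    rw [(F.map f).compat, ← LinearMap.comp_assoc, ← LinearMap.rTensor_comp, colimitι_comp_map]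

noncomputable def colimitCoact : colimitModule F →ₗ[k] colimitModule F ⊗[k] Q :=
  (colimit.desc (F ⋙ forget k Q) (colimitCoactCocone F)).hom

theorem colimitCoact_comp_ι (j : J) :
    colimitCoact F ∘ₗ colimitι F j = (colimitι F j).rTensor Q ∘ₗ (F.obj j).coact :=
  congrArg ModuleCat.Hom.hom (colimit.ι_desc (colimitCoactCocone F) j)

noncomputable def colimitComod : Comod k Q where
  carrier := colimitModule F
  coact := colimitCoact F
  coassoc := colimitModule_linearMap_ext F fun j => by
    rw [assoc_comp_rTensor_comp_of_comp_eq (colimitCoact_comp_ι F j), (F.obj j).coassoc,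
      lTensor_comp_of_comp_eq (colimitCoact_comp_ι F j)]
  counital := colimitModule_linearMap_ext F fun j => by
    rw [rid_comp_lTensor_comp_of_comp_eq (colimitCoact_comp_ι F j), (F.obj j).counital]
    rfl

noncomputable def colimitCocone : Cocone F where
  pt := colimitComod F
  ι.app j := ⟨colimitι F j, colimitCoact_comp_ι F j⟩
  ι.naturality _ _ f := ComodHom.ext (colimitι_comp_map F f)

noncomputable def isColimitForgetMapColimitCocone :
    IsColimit ((forget k Q).mapCocone (colimitCocone F)) :=
  colimit.isColimit (F ⋙ forget k Q)

noncomputable def colimitCoconeIsColimit : IsColimit (colimitCocone F) :=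
  isColimitOfReflects (forget k Q) (isColimitForgetMapColimitCocone F)

end Colimits

section Subcomodules

variable (M : Comod k Q)

def IsSubcomodule (N : Submodule k M.carrier) : Prop :=
  N ≤ (LinearMap.range (N.subtype.rTensor Q)).comap M.coact

variable {M} {N : Submodule k M.carrier} (hN : M.IsSubcomodule N)

noncomputable def subcomoduleCoact : N →ₗ[k] N ⊗[k] Q :=
  (LinearEquiv.ofInjective _ (Module.Flat.rTensor_preserves_injective_linearMap _
      N.injective_subtype)).symm.toLinearMap ∘ₗ
    M.coact.restrict fun _ hx => hN hx

theorem rTensor_subtype_comp_subcomoduleCoact :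
    N.subtype.rTensor Q ∘ₗ subcomoduleCoact hN = M.coact ∘ₗ N.subtype := by
  ext x
  simp [subcomoduleCoact]

noncomputable def subcomodule : Comod k Q where
  carrier := N
  coact := subcomoduleCoact hN
  coassoc := by
    have h := (rTensor_subtype_comp_subcomoduleCoact hN).symm
    apply (LinearMap.cancel_left (Module.Flat.rTensor_preserves_injective_linearMap (M := Q ⊗[k] Q)
      _ N.injective_subtype)).mp
    rw [← assoc_comp_rTensor_comp_of_comp_eq h, M.coassoc, lTensor_comp_of_comp_eq h]
  counital := by
    have h := (rTensor_subtype_comp_subcomoduleCoact hN).symm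
    apply (LinearMap.cancel_left N.injective_subtype).mp
    rw [← rid_comp_lTensor_comp_of_comp_eq h, M.counital]
    rfl

def subcomoduleι : subcomodule hN ⟶ M :=
  ⟨N.subtype, (rTensor_subtype_comp_subcomoduleCoact hN).symm⟩

theorem range_rTensor_subtype_mono {N₁ N₂ : Submodule k M.carrier} (h : N₁ ≤ N₂) :
    LinearMap.range (N₁.subtype.rTensor Q) ≤ LinearMap.range (N₂.subtype.rTensor Q) := by
  rw [← Submodule.subtype_comp_inclusion _ _ h, LinearMap.rTensor_comp]
  exact LinearMap.range_comp_le_range _ _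

theorem IsSubcomodule.sup {N₁ N₂ : Submodule k M.carrier} (h₁ : M.IsSubcomodule N₁)
    (h₂ : M.IsSubcomodule N₂) : M.IsSubcomodule (N₁ ⊔ N₂) :=
  sup_le (h₁.trans (Submodule.comap_mono (range_rTensor_subtype_mono le_sup_left)))
    (h₂.trans (Submodule.comap_mono (range_rTensor_subtype_mono le_sup_right)))

def subcomoduleInclusion {N₁ N₂ : Submodule k M.carrier} (h₁ : M.IsSubcomodule N₁)
    (h₂ : M.IsSubcomodule N₂) (h : N₁ ≤ N₂) : subcomodule h₁ ⟶ subcomodule h₂ where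
  toLinearMap := Submodule.inclusion h
  compat := by
    apply (LinearMap.cancel_left
      (Module.Flat.rTensor_preserves_injective_linearMap (M := Q) _ N₂.injective_subtype)).mp
    change N₂.subtype.rTensor Q ∘ₗ subcomoduleCoact h₂ ∘ₗ _ =
      N₂.subtype.rTensor Q ∘ₗ (Submodule.inclusion h).rTensor Q ∘ₗ subcomoduleCoact h₁
    rw [← LinearMap.comp_assoc, rTensor_subtype_comp_subcomoduleCoact, LinearMap.comp_assoc,
      Submodule.subtype_comp_inclusion, ← LinearMap.comp_assoc, ← LinearMap.rTensor_comp,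
      Submodule.subtype_comp_inclusion, rTensor_subtype_comp_subcomoduleCoact]

end Subcomodules

section FDSubcomodules

variable (M : Comod k Q)

abbrev FDSubcomodule : Type u :=
  {N : Submodule k M.carrier // FiniteDimensional k N ∧ M.IsSubcomodule N}

instance : Nonempty M.FDSubcomodule :=
  ⟨⟨⊥, inferInstance, bot_le⟩⟩

instance : IsDirected M.FDSubcomodule (· ≤ ·) where
  directed N₁ N₂ :=
    have := N₁.2.1
    have := N₂.2.1
    ⟨⟨N₁.1 ⊔ N₂.1, inferInstance, N₁.2.2.sup N₂.2.2⟩, le_sup_left (a := N₁.1),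
      le_sup_right (a := N₁.1)⟩

noncomputable def fdSubcomoduleDiagram : M.FDSubcomodule ⥤ Comod k Q where
  obj N := subcomodule N.2.2
  map f := subcomoduleInclusion _ _ (leOfHom f)
  map_id _ := rfl
  map_comp _ _ := rfl

noncomputable def fdSubcomoduleCocone : Cocone M.fdSubcomoduleDiagram where
  pt := M
  ι.app N := subcomoduleι N.2.2
  ι.naturality _ _ _ := rfl

variable {M} in
theorem exists_fdSubcomodule_mem (x : M.carrier) : ∃ N : M.FDSubcomodule, x ∈ N.1 := by
  classical
  let b := Module.Free.chooseBasis k Q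
  let m := equivFinsuppOfBasisRight b (M.coact x)
  let N := Submodule.span k (Set.range m)
  have hx : M.coact x ∈ LinearMap.range (N.subtype.rTensor Q) :=
    mem_range_rTensor_subtype_of_forall_mem b fun i => Submodule.subset_span ⟨i, rfl⟩
  have hN : M.IsSubcomodule N := by
    refine Submodule.span_le.mpr ?_
    rintro _ ⟨i, rfl⟩
    have hcoassoc : M.coact.rTensor Q (M.coact x) = (TensorProduct.assoc k M.carrier Q Q).symm
        (Coalgebra.comul.lTensor M.carrier (M.coact x)) :=
      (LinearEquiv.eq_symm_apply _).mpr congr($(M.coassoc) x)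
    change M.coact (m i) ∈ LinearMap.range (N.subtype.rTensor Q)
    rw [← equivFinsuppOfBasisRight_rTensor_apply, hcoassoc,
      equivFinsuppOfBasisRight_assoc_symm_apply, ← LinearMap.comp_apply, ← LinearMap.lTensor_comp]
    exact LinearMap.lTensor_mem_range_rTensor_subtype _ hx
  refine ⟨⟨N, FiniteDimensional.span_of_finite k (Finsupp.finite_range m), hN⟩, ?_⟩
  have := LinearMap.rid_lTensor_mem_of_mem_range_rTensor_subtype Coalgebra.counit hx
  rwa [← LinearMap.comp_apply, ← LinearEquiv.coe_coe, ← LinearMap.comp_apply, M.counital] at this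

noncomputable def fdSubcomoduleCoconeIsColimit : IsColimit M.fdSubcomoduleCocone :=
  isColimitOfReflects (forget k Q) <| isColimitOfReflects (CategoryTheory.forget (ModuleCat k)) <|
    Types.FilteredColimit.isColimitOf' _ _
      (fun x => let ⟨N, hx⟩ := exists_fdSubcomodule_mem x; ⟨N, ⟨x, hx⟩, rfl⟩)
      (fun N _ _ h => ⟨N, 𝟙 N, congrArg _ (N.1.injective_subtype h)⟩)

end FDSubcomodules

theorem finiteDimensional_of_isCompactObj {M : Comod k Q} (hM : IsCompactObj M) :
    FiniteDimensional k M.carrier := by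
  obtain ⟨_⟩ := hM M.FDSubcomodule inferInstance inferInstance
  obtain ⟨N, g, hg⟩ := Types.jointly_surjective_of_isColimit
    (isColimitOfPreserves (coyoneda.obj (op M)) M.fdSubcomoduleCoconeIsColimit) (𝟙 M)
  have := N.2.1
  exact LinearMap.finiteDimensional_of_surjective N.1.subtype
    (LinearMap.range_eq_top.mpr fun x => ⟨g.toLinearMap x, congr($(hg).toLinearMap x)⟩)

section FiniteDimensional

variable {J : Type u} [SmallCategory J] [IsFiltered J] {F : J ⥤ Comod k Q} {c : Cocone F}
  (hc : IsColimit ((forget k Q).mapCocone c)) (M : Comod k Q) [FiniteDimensional k M.carrier]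
include hc

theorem exists_comp_map_eq_of_comp_eq {j : J} (g₁ g₂ : M ⟶ F.obj j)
    (h : g₁ ≫ c.ι.app j = g₂ ≫ c.ι.app j) :
    ∃ (j' : J) (u : j ⟶ j'), g₁ ≫ F.map u = g₂ ≫ F.map u := by
  obtain ⟨j', u, hu⟩ := ModuleCat.exists_map_comp_eq_of_isColimit hc g₁.toLinearMap
    g₂.toLinearMap congr(($h).toLinearMap)
  exact ⟨j', u, ComodHom.ext hu⟩

open MonoidalCategory in
theorem exists_comp_ι_app_eq (f : M ⟶ c.pt) : ∃ (j : J) (g : M ⟶ F.obj j), g ≫ c.ι.app j = f := by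
  obtain ⟨j₀, g₀, hg₀⟩ := ModuleCat.exists_comp_eq_of_isColimit hc f.toLinearMap
  change M.carrier →ₗ[k] (F.obj j₀).carrier at g₀
  change (c.ι.app j₀).toLinearMap ∘ₗ g₀ = f.toLinearMap at hg₀
  let d₁ : M.carrier →ₗ[k] (F.obj j₀).carrier ⊗[k] Q := (F.obj j₀).coact ∘ₗ g₀
  let d₂ : M.carrier →ₗ[k] (F.obj j₀).carrier ⊗[k] Q := g₀.rTensor Q ∘ₗ M.coact
  have hd : (c.ι.app j₀).toLinearMap.rTensor Q ∘ₗ d₁ =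
      (c.ι.app j₀).toLinearMap.rTensor Q ∘ₗ d₂ := by
    rw [← LinearMap.comp_assoc, ← (c.ι.app j₀).compat, LinearMap.comp_assoc, hg₀,
      ← LinearMap.comp_assoc, ← LinearMap.rTensor_comp, hg₀]
    exact f.compat
  obtain ⟨j, u, hu⟩ := ModuleCat.exists_map_comp_eq_of_isColimit
    (isColimitOfPreserves (tensorRight (ModuleCat.of k Q)) hc) d₁ d₂ hd
  change (F.map u).toLinearMap.rTensor Q ∘ₗ d₁ = (F.map u).toLinearMap.rTensor Q ∘ₗ d₂ at hu
  refine ⟨j, ⟨(F.map u).toLinearMap ∘ₗ g₀, ?_⟩, ComodHom.ext ?_⟩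
  · rw [← LinearMap.comp_assoc, (F.map u).compat, LinearMap.comp_assoc]
    exact hu.trans (by rw [LinearMap.rTensor_comp, LinearMap.comp_assoc])
  · change ((c.ι.app j).toLinearMap ∘ₗ (F.map u).toLinearMap) ∘ₗ g₀ = f.toLinearMap
    rw [← hg₀]
    exact congr($((c.w u)).toLinearMap ∘ₗ g₀)

noncomputable def isColimitCoyonedaMapCocone :
    IsColimit ((coyoneda.obj (op M)).mapCocone c) :=
  Types.FilteredColimit.isColimitOf' _ _
    (fun f => let ⟨j, g, hg⟩ := exists_comp_ι_app_eq hc M f; ⟨j, g, hg.symm⟩)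
    (fun _ g₁ g₂ h => exists_comp_map_eq_of_comp_eq hc M g₁ g₂ h)

end FiniteDimensional

theorem isCompactObj_of_finiteDimensional (M : Comod k Q) [FiniteDimensional k M.carrier] :
    IsCompactObj M := fun _ _ _ =>
  ⟨⟨fun {F} => preservesColimit_of_preserves_colimit_cocone (colimitCoconeIsColimit F)
    (isColimitCoyonedaMapCocone (isColimitForgetMapColimitCocone F) M)⟩⟩

end Comod

/-- Let `k` be a field and `Q` a `k`-coalgebra.  A right `Q`-comodule
is a compact object of the category of right `Q`-comodules if and only if it is
finite-dimensional over `k`. -/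
theorem comodule_isCompact_iff_finiteDimensional (M : Comod k Q) :
    IsCompactObj M ↔ FiniteDimensional k M.carrier :=
  ⟨Comod.finiteDimensional_of_isCompactObj, fun _ => Comod.isCompactObj_of_finiteDimensional M⟩
end

section
/- Let U be a finite-dimensional factorizable quasitriangular Hopf algebra over a field k, let V, W be finite-dimensional U-modules, and let B be a nonzero finite-dimensional (End_k(W), End_k(V))-bimodule in U-mod which is compatible with the quantum moment maps μ_V : U → End_k(V) and μ_W : U → End_k(W) given by the representation morphisms, in the sense that h · b = μ_W(h₍₁₎) ▸ b ◂ μ_V(S(h₍₂₎)) for all h ∈ U, b ∈ B. Then B is isomorphic, as a bimodule in U-mod, to a finite direct sum of copies of Hom_k(V,W), where Hom_k(V,W) carries the U-action (h · f)(v) = h₍₁₎ · f(S(h₍₂₎) · v) and the bimodule structure by composition. -/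
/-!
After choosing bases, `Hom_k(V, W) = Matrix ι κ k`, and the maps `X ↦ E_{st} X E_{ur}` form a
system of matrix units of `End_k(Matrix ι κ k)`. Their images `T a c` under the two commuting
actions form a system of matrix units in `End_k B`. Any such system identifies `B` with `ι × κ`
copies of the corner `T a₀ a₀ B`, compatibly with the actions, so choosing a basis of the corner
gives `B ≅ Hom_k(V, W)ⁿ` as bimodules. Compatibility with the quantum moment maps writes the
`U`-action on `B` in terms of the bimodule structure, so this isomorphism is automatically
`U`-linear.
-/

open Coalgebra TensorProduct MulOpposite

/-- The older Mathlib `Coalgebra.Repr`, with its indexing type bundled as a field. -/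
structure Coalgebra.BundledRepr (R : Type*) {A : Type*}
    [CommSemiring R] [AddCommMonoid A] [Module R A] [CoalgebraStruct R A] (a : A) where
  /-- the indexing type of a representation of `comul a` -/
  {ι : Type*}
  /-- the finite indexing set of a representation of `comul a` -/
  (index : Finset ι)
  /-- the first coordinate of a representation of `comul a` -/
  (left : ι → A)
  /-- the second coordinate of a representation of `comul a` -/
  (right : ι → A)
  /-- `comul a` is equal to a finite sum of some pure tensors -/
  (eq : ∑ i ∈ index, left i ⊗ₜ[R] right i = CoalgebraStruct.comul a)

namespace Module.End

variable {k B K : Type*} [CommSemiring k] [AddCommMonoid B] [Module k B]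
  [Fintype K] [DecidableEq K]

structure IsMatrixUnits (T : K → K → Module.End k B) : Prop where
  mul_eq : ∀ a c d f, T a c * T d f = if c = d then T a f else 0
  sum_diag : ∑ a, T a a = 1

namespace IsMatrixUnits

variable {T : K → K → Module.End k B} (hT : IsMatrixUnits T)
include hT

theorem apply_apply (a c d f : K) (b : B) :
    T a c (T d f b) = if c = d then T a f b else 0 := by
  rw [← Module.End.mul_apply, hT.mul_eq]
  split_ifs <;> rfl

theorem apply_mem_range (a₀ l : K) (b : B) : T a₀ l b ∈ LinearMap.range (T a₀ a₀) :=
  ⟨T a₀ l b, by rw [hT.apply_apply, if_pos rfl]⟩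

noncomputable def equivPiRange (a₀ : K) : B ≃ₗ[k] (K → LinearMap.range (T a₀ a₀)) :=
  LinearEquiv.ofLinearMap
    (LinearMap.pi fun l => (T a₀ l).codRestrict _ (hT.apply_mem_range a₀ l))
    (∑ l, T l a₀ ∘ₗ (Submodule.subtype _ ∘ₗ LinearMap.proj l))
    (by
      refine LinearMap.ext fun F => funext fun l => Subtype.ext ?_
      obtain ⟨b, hb⟩ := (F l).2
      simp [map_sum, hT.apply_apply, ← hb])
    (by
      ext b
      simp [hT.apply_apply, ← LinearMap.sum_apply, hT.sum_diag])

@[simp]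
theorem coe_equivPiRange_apply (a₀ : K) (b : B) (l : K) :
    (hT.equivPiRange a₀ b l : B) = T a₀ l b := rfl

theorem equivPiRange_apply_apply (a₀ a c : K) (b : B) :
    hT.equivPiRange a₀ (T a c b) = Pi.single a (hT.equivPiRange a₀ b c) := by
  ext l
  rw [coe_equivPiRange_apply, hT.apply_apply, Pi.single_apply]
  split_ifs <;> simp_all

end IsMatrixUnits

end Module.End

section MatrixBimodule

open Matrix (single)
open Module.End

variable {k B ι κ : Type*} [CommSemiring k] [AddCommMonoid B] [Module k B]
  [Fintype ι] [DecidableEq ι] [Fintype κ] [DecidableEq κ]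
  (L : Matrix ι ι k →ₐ[k] Module.End k B) (R : (Matrix κ κ k)ᵐᵒᵖ →ₐ[k] Module.End k B)

/-- The image of the matrix unit `X ↦ E_{st} X E_{ur}` of `End(Matrix ι κ k)`,
for `a = (s, r)` and `c = (t, u)`. -/
noncomputable def bimoduleMatrixUnit (a c : ι × κ) : Module.End k B :=
  L (single a.1 c.1 1) * R (op (single c.2 a.2 1))

variable {L R}

theorem isMatrixUnits_bimoduleMatrixUnit (hLR : ∀ M N, Commute (L M) (R (op N))) :
    IsMatrixUnits (bimoduleMatrixUnit L R) where
  mul_eq a c d f := by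
    simp only [bimoduleMatrixUnit]
    rw [mul_assoc, ← mul_assoc (R _), ← (hLR _ _).eq, mul_assoc, ← mul_assoc, ← map_mul,
      ← map_mul, ← op_mul]
    by_cases h₁ : c.1 = d.1 <;> by_cases h₂ : c.2 = d.2 <;>
      simp [h₁, h₂, Prod.ext_iff, Matrix.single_mul_single_of_ne, Ne.symm]
  sum_diag := by
    simp only [bimoduleMatrixUnit, Fintype.sum_prod_type, ← Finset.mul_sum, ← Finset.sum_mul,
      ← map_sum, ← Finset.op_sum, Matrix.sum_single_one, op_one, map_one, one_mul]

theorem left_eq_sum_bimoduleMatrixUnit (M : Matrix ι ι k) :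
    L M = ∑ r, ∑ s, ∑ t, M s t • bimoduleMatrixUnit L R (s, r) (t, r) := by
  have hM : M = ∑ s, ∑ t, M s t • single s t 1 := by
    simpa [Matrix.smul_single] using M.matrix_eq_sum_single
  conv_lhs => rw [← mul_one (L M), ← map_one R, ← op_one, ← Matrix.sum_single_one, hM]
  simp only [bimoduleMatrixUnit, map_sum, map_smul, Finset.op_sum, Finset.sum_mul,
    Finset.mul_sum, smul_mul_assoc]

theorem right_eq_sum_bimoduleMatrixUnit (M : Matrix κ κ k) :
    R (op M) = ∑ u, ∑ r, ∑ s, M u r • bimoduleMatrixUnit L R (s, r) (s, u) := by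
  have hM : M = ∑ u, ∑ r, M u r • single u r 1 := by
    simpa [Matrix.smul_single] using M.matrix_eq_sum_single
  conv_lhs => rw [← one_mul (R _), ← map_one L, ← Matrix.sum_single_one, hM]
  simp only [bimoduleMatrixUnit, map_sum, map_smul, Finset.op_sum, op_smul, Finset.sum_mul,
    Finset.mul_sum, Finset.smul_sum, mul_smul_comm]

variable (hT : IsMatrixUnits (bimoduleMatrixUnit L R))

theorem equivPiRange_left_apply (a₀ : ι × κ) (M : Matrix ι ι k) (b : B) (s : ι) (r : κ) :
    hT.equivPiRange a₀ (L M b) (s, r) =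
      ∑ t, M s t • hT.equivPiRange a₀ b (t, r) := by
  rw [left_eq_sum_bimoduleMatrixUnit (R := R) M]
  simp [LinearMap.sum_apply, map_sum, IsMatrixUnits.equivPiRange_apply_apply, Finset.sum_apply,
    Pi.single_apply, Prod.ext_iff, ite_and, Finset.sum_ite_eq]

theorem equivPiRange_right_apply (a₀ : ι × κ) (M : Matrix κ κ k) (b : B) (s : ι) (r : κ) :
    hT.equivPiRange a₀ (R (op M) b) (s, r) =
      ∑ u, M u r • hT.equivPiRange a₀ b (s, u) := by
  rw [right_eq_sum_bimoduleMatrixUnit (L := L) M]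
  simp [LinearMap.sum_apply, map_sum, IsMatrixUnits.equivPiRange_apply_apply, Finset.sum_apply,
    Pi.single_apply, Prod.ext_iff, ite_and, Finset.sum_ite_eq]

end MatrixBimodule

def Matrix.prodArrowEquivArrowMatrix (k ι κ n : Type*) [CommSemiring k] :
    (ι × κ → n → k) ≃ₗ[k] (n → Matrix ι κ k) where
  toFun F i := Matrix.of fun s r => F (s, r) i
  invFun G a i := G i a.1 a.2
  map_add' _ _ := rfl
  map_smul' _ _ := rfl
  left_inv _ := rfl
  right_inv _ := rfl

@[simp]
theorem Matrix.prodArrowEquivArrowMatrix_apply {k ι κ n : Type*} [CommSemiring k]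
    (F : ι × κ → n → k) (i : n) (s : ι) (r : κ) :
    Matrix.prodArrowEquivArrowMatrix k ι κ n F i s r = F (s, r) i := rfl

theorem exists_linearEquiv_pi_matrix {k B ι κ : Type*} [Field k] [AddCommGroup B] [Module k B]
    [FiniteDimensional k B] [Fintype ι] [DecidableEq ι] [Fintype κ] [DecidableEq κ]
    (L : Matrix ι ι k →ₐ[k] Module.End k B) (R : (Matrix κ κ k)ᵐᵒᵖ →ₐ[k] Module.End k B)
    (hLR : ∀ M N, Commute (L M) (R (op N))) :
    ∃ (n : ℕ) (e : B ≃ₗ[k] (Fin n → Matrix ι κ k)),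
      (∀ M b i, e (L M b) i = M * e b i) ∧ (∀ M b i, e (R (op M) b) i = e b i * M) := by
  have hT := isMatrixUnits_bimoduleMatrixUnit hLR
  cases isEmpty_or_nonempty (ι × κ) with
  | inl hK =>
    have h10 : (1 : Module.End k B) = 0 := by simpa using hT.sum_diag.symm
    have : Subsingleton B := subsingleton_of_forall_eq 0 fun b => by
      simpa using LinearMap.congr_fun h10 b
    exact ⟨0, LinearEquiv.ofSubsingleton _ _, fun _ _ i => i.elim0, fun _ _ i => i.elim0⟩
  | inr hK =>
    obtain ⟨a₀⟩ := hK
    let c := Module.finBasis k (LinearMap.range (bimoduleMatrixUnit L R a₀ a₀))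
    let e := (hT.equivPiRange a₀).trans ((LinearEquiv.piCongrRight fun _ => c.equivFun).trans
      (Matrix.prodArrowEquivArrowMatrix k ι κ _))
    refine ⟨_, e, fun M b i => ?_, fun M b i => ?_⟩
    · ext s r
      simp [e, equivPiRange_left_apply, Matrix.mul_apply]
    · ext s r
      simp [e, equivPiRange_right_apply, Matrix.mul_apply, mul_comm]

theorem exists_linearEquiv_pi_linearMap {k B V W : Type*} [Field k]
    [AddCommGroup B] [Module k B] [FiniteDimensional k B]
    [AddCommGroup V] [Module k V] [FiniteDimensional k V]
    [AddCommGroup W] [Module k W] [FiniteDimensional k W]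
    (actL : Module.End k W →ₐ[k] Module.End k B) (actR : (Module.End k V)ᵐᵒᵖ →ₐ[k] Module.End k B)
    (hcomm : ∀ g g', Commute (actL g) (actR (op g'))) :
    ∃ (n : ℕ) (e : B ≃ₗ[k] (Fin n → (V →ₗ[k] W))),
      (∀ g b i, e (actL g b) i = g ∘ₗ e b i) ∧ (∀ g b i, e (actR (op g) b) i = e b i ∘ₗ g) := by
  let bW := Module.finBasis k W
  let bV := Module.finBasis k V
  obtain ⟨n, e, hL, hR⟩ := exists_linearEquiv_pi_matrix
    (actL.comp (Matrix.toLinAlgEquiv bW).toAlgHom)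
    (actR.comp (AlgEquiv.op (Matrix.toLinAlgEquiv bV)).toAlgHom)
    (fun _ _ => hcomm _ _)
  refine ⟨n, e.trans (LinearEquiv.piCongrRight fun _ => Matrix.toLin bV bW),
    fun g b i => ?_, fun g b i => ?_⟩
  · have hg : Matrix.toLinAlgEquiv bW (LinearMap.toMatrix bW bW g) = g :=
      Matrix.toLinAlgEquiv_toMatrixAlgEquiv bW g
    have := hL (LinearMap.toMatrix bW bW g) b i
    simp only [AlgHom.comp_apply, AlgEquiv.coe_toAlgHom, hg] at this
    simp [this, Matrix.toLin_mul bV bW bW]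
  · have hg : Matrix.toLinAlgEquiv bV (LinearMap.toMatrix bV bV g) = g :=
      Matrix.toLinAlgEquiv_toMatrixAlgEquiv bV g
    have := hR (LinearMap.toMatrix bV bV g) b i
    simp only [AlgHom.comp_apply, AlgEquiv.coe_toAlgHom, AlgEquiv.op_apply_apply, unop_op, hg] at this
    simp [this, Matrix.toLin_mul bV bV bW]

namespace Coalgebra.BundledRepr

universe w

variable (R : Type*) {A : Type*} [CommSemiring R] [AddCommMonoid A] [Module R A]
  [CoalgebraStruct R A]

noncomputable def arbitrary (a : A) : BundledRepr.{_, _, w} R a :=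
  let r := Repr.arbitrary R a
  let j : ULift.{w} (Fin r.index.card) ≃ r.index := Equiv.ulift.trans r.index.equivFin.symm
  { index := Finset.univ
    left := fun u => r.left (j u)
    right := fun u => r.right (j u)
    eq := by
      rw [← r.eq, ← Finset.sum_coe_sort r.index]
      exact Fintype.sum_equiv j _ _ fun _ => rfl }

variable {R}

theorem sum_eq_lift {M : Type*} [AddCommMonoid M] [Module R M] (Φ : A →ₗ[R] A →ₗ[R] M) {a : A}
    (r : BundledRepr R a) :
    ∑ m ∈ r.index, Φ (r.left m) (r.right m) = TensorProduct.lift Φ (comul a) := by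
  rw [← r.eq, map_sum]
  simp

end Coalgebra.BundledRepr

section

variable {k U : Type*} [Field k] [Ring U] [HopfAlgebra k U]
variable {ι : Type*} [Fintype ι]

/-- The Drinfeld map `Φ(φ) = (φ ⊗ id)(R₂₁ R)`, for the R-matrix
`R = ∑ᵢ R₁ i ⊗ R₂ i`:  `Φ(φ) = ∑ᵢⱼ φ(R''ᵢ R'ⱼ) R'ᵢ R''ⱼ`. -/
noncomputable def drinfeldMap (R₁ R₂ : ι → U) (φ : Module.Dual k U) : U :=
  ∑ i : ι, ∑ j : ι, φ (R₂ i * R₁ j) • (R₁ i * R₂ j)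

theorem qmmCompatible_bimodule_iso_directSum_hom_general
    -- finite-dimensional `U`-modules `V` and `W`:
    {V W : Type*} [AddCommGroup V] [Module k V] [FiniteDimensional k V]
    [AddCommGroup W] [Module k W] [FiniteDimensional k W]
    (ρV : U →ₐ[k] Module.End k V) (ρW : U →ₐ[k] Module.End k W)
    -- a nonzero finite-dimensional `(End_k W, End_k V)`-bimodule `B`
    {B : Type*} [AddCommGroup B] [Module k B] [FiniteDimensional k B]
    (actL : Module.End k W →ₐ[k] Module.End k B)
    (actR : (Module.End k V)ᵐᵒᵖ →ₐ[k] Module.End k B)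
    (hcomm : ∀ (g : Module.End k W) (g' : Module.End k V),
      Commute (actL g) (actR (op g')))
    -- a `U`-module structure on `B`, compatible with the quantum moment maps
    (ρB : U →ₐ[k] Module.End k B)
    (hcompat : ∀ (h : U) (b : B) (r : Coalgebra.BundledRepr k h),
      ρB h b = ∑ m ∈ r.index,
        actL (ρW (r.left m)) (actR (op (ρV (HopfAlgebra.antipode (R := k) (r.right m)))) b)) :
    ∃ (n : ℕ) (e : B ≃ₗ[k] (Fin n → (V →ₗ[k] W))),
      (∀ (g : Module.End k W) (b : B) (i : Fin n), e (actL g b) i = g ∘ₗ e b i) ∧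
      (∀ (g : Module.End k V) (b : B) (i : Fin n), e (actR (op g) b) i = e b i ∘ₗ g) ∧
      (∀ (h : U) (b : B) (r : Coalgebra.BundledRepr k h) (i : Fin n),
        e (ρB h b) i = ∑ m ∈ r.index,
          ρW (r.left m) ∘ₗ e b i ∘ₗ ρV (HopfAlgebra.antipode (R := k) (r.right m))) := by
  obtain ⟨n, e, hL, hR⟩ := exists_linearEquiv_pi_linearMap actL actR hcomm
  refine ⟨n, e, hL, hR, fun h b r i => ?_⟩
  -- `hcompat` only sees representations in one universe, so compare both sums with `Φ (comul h)`.
  let Φ : U →ₗ[k] U →ₗ[k] (V →ₗ[k] W) := LinearMap.mk₂ k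
    (fun x y => ρW x ∘ₗ e b i ∘ₗ ρV (HopfAlgebra.antipode (R := k) y))
    (by intros; simp [LinearMap.add_comp]) (by intros; simp [LinearMap.smul_comp])
    (by intros; simp [LinearMap.comp_add]) (by intros; simp [LinearMap.comp_smul])
  rw [hcompat h b (Coalgebra.BundledRepr.arbitrary k h), map_sum, Finset.sum_apply]
  simp only [hL, hR]
  exact (Coalgebra.BundledRepr.sum_eq_lift Φ _).trans (Coalgebra.BundledRepr.sum_eq_lift Φ r).symm

/-- Let `U` be a finite-dimensional factorizable quasitriangular Hopf
algebra over a field `k`, `V, W` finite-dimensional `U`-modules (given by representations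
`ρV, ρW`), and `B` a nonzero finite-dimensional `(End_k(W), End_k(V))`-bimodule in
`U`-mod which is compatible with the quantum moment maps `μ_V = ρV`, `μ_W = ρW` in the
sense that `h · b = μ_W(h₍₁₎) ▸ b ◂ μ_V(S(h₍₂₎))`.  Then `B` is isomorphic, as a bimodule
in `U`-mod, to a finite direct sum of copies of `Hom_k(V, W)` with the `U`-action
`(h · f)(v) = h₍₁₎ · f(S(h₍₂₎) · v)` and the bimodule structure given by composition. -/
theorem qmmCompatible_bimodule_iso_directSum_hom
    [FiniteDimensional k U]
    (R₁ R₂ : ι → U)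
    -- `R Δ(x) = Δᵒᵖ(x) R`:
    (ax_comm : ∀ (x : U) (r : Coalgebra.BundledRepr k x),
      ∑ i : ι, ∑ m ∈ r.index, (R₁ i * r.left m) ⊗ₜ[k] (R₂ i * r.right m) =
      ∑ i : ι, ∑ m ∈ r.index, (r.right m * R₁ i) ⊗ₜ[k] (r.left m * R₂ i))
    -- `(Δ ⊗ id)(R) = R₁₃ R₂₃`:
    (ax_delta_left : ∀ r : ∀ i : ι, Coalgebra.BundledRepr k (R₁ i),
      ∑ i : ι, ∑ m ∈ (r i).index, ((r i).left m ⊗ₜ[k] (r i).right m) ⊗ₜ[k] R₂ i =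
      ∑ i : ι, ∑ j : ι, (R₁ i ⊗ₜ[k] R₁ j) ⊗ₜ[k] (R₂ i * R₂ j))
    -- `(id ⊗ Δ)(R) = R₁₃ R₁₂`:
    (ax_delta_right : ∀ r : ∀ i : ι, Coalgebra.BundledRepr k (R₂ i),
      ∑ i : ι, ∑ m ∈ (r i).index, R₁ i ⊗ₜ[k] ((r i).left m ⊗ₜ[k] (r i).right m) =
      ∑ i : ι, ∑ j : ι, (R₁ i * R₁ j) ⊗ₜ[k] (R₂ j ⊗ₜ[k] R₂ i))
    -- Yang–Baxter equation:
    (ax_ybe : ∑ i : ι, ∑ j : ι, ∑ l : ι,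
        (R₁ i * R₁ j) ⊗ₜ[k] ((R₂ i * R₁ l) ⊗ₜ[k] (R₂ j * R₂ l)) =
      ∑ i : ι, ∑ j : ι, ∑ l : ι,
        (R₁ j * R₁ l) ⊗ₜ[k] ((R₁ i * R₂ l) ⊗ₜ[k] (R₂ i * R₂ j)))
    -- factorizability: the Drinfeld map is bijective:
    (hfact : Function.Bijective (drinfeldMap (k := k) R₁ R₂))
    -- finite-dimensional `U`-modules `V` and `W`:
    {V W : Type*} [AddCommGroup V] [Module k V] [FiniteDimensional k V]
    [AddCommGroup W] [Module k W] [FiniteDimensional k W]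
    (ρV : U →ₐ[k] Module.End k V) (ρW : U →ₐ[k] Module.End k W)
    -- a nonzero finite-dimensional `(End_k W, End_k V)`-bimodule `B`
    {B : Type*} [AddCommGroup B] [Module k B] [FiniteDimensional k B] [Nontrivial B]
    (actL : Module.End k W →ₐ[k] Module.End k B)
    (actR : (Module.End k V)ᵐᵒᵖ →ₐ[k] Module.End k B)
    (hcomm : ∀ (g : Module.End k W) (g' : Module.End k V),
      Commute (actL g) (actR (op g')))
    -- a `U`-module structure on `B`, compatible with the quantum moment maps
    (ρB : U →ₐ[k] Module.End k B)
    (hcompat : ∀ (h : U) (b : B) (r : Coalgebra.BundledRepr k h),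
      ρB h b = ∑ m ∈ r.index,
        actL (ρW (r.left m)) (actR (op (ρV (HopfAlgebra.antipode (R := k) (r.right m)))) b)) :
    ∃ (n : ℕ) (e : B ≃ₗ[k] (Fin n → (V →ₗ[k] W))),
      (∀ (g : Module.End k W) (b : B) (i : Fin n), e (actL g b) i = g ∘ₗ e b i) ∧
      (∀ (g : Module.End k V) (b : B) (i : Fin n), e (actR (op g) b) i = e b i ∘ₗ g) ∧
      (∀ (h : U) (b : B) (r : Coalgebra.BundledRepr k h) (i : Fin n),
        e (ρB h b) i = ∑ m ∈ r.index,
          ρW (r.left m) ∘ₗ e b i ∘ₗ ρV (HopfAlgebra.antipode (R := k) (r.right m))) :=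
  qmmCompatible_bimodule_iso_directSum_hom_general ρV ρW actL actR hcomm ρB hcompat

end
end
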